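/- arXiv:0903.5165 — 7 statements merged into one kernel-verified Lean document; each statement's English description precedes it below -/
import Mathlib

section
/- Let $T$ be a real symmetric positive definite $n \times n$ matrix and $D$ a real diagonal $n \times n$ matrix. For $1 \le m \le n$, let $d_m$ denote the $m$-th leading principal minor determinant of the complex matrix $T + \sqrt{-1}\, D$. Then for every $m = 1, 2, \dots, n-1$, the real part of $d_{m+1} \overline{d_m}$ is strictly positive. -/
/-!
Write `A` for the leading `(m+1)`-block of `T + iD`. Since `D` is real symmetric, `y* D y` is real,
so `Re (y* A y) = Re (y* T y) > 0` for `y ≠ 0`. Take for `y` the last column of `adj A`: then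
`A y = det A • eₘ₊₁` and `yₘ₊₁ = dₘ`, hence `y* A y = dₘ₊₁ · conj dₘ`.
-/

open Matrix ComplexConjugate

open scoped ComplexOrder

namespace Matrix

variable {ι : Type*} [Fintype ι]

lemma re_star_dotProduct_map_ofReal_mulVec (R : Matrix ι ι ℝ) (y : ι → ℂ) :
    (star y ⬝ᵥ R.map ((↑) : ℝ → ℂ) *ᵥ y).re =
      (fun i => (y i).re) ⬝ᵥ R *ᵥ (fun i => (y i).re) +
        (fun i => (y i).im) ⬝ᵥ R *ᵥ (fun i => (y i).im) := by
  simp only [dotProduct, mulVec, map_apply, Pi.star_apply, Finset.mul_sum, Complex.re_sum,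
    ← Finset.sum_add_distrib]
  refine Finset.sum_congr rfl fun i _ => Finset.sum_congr rfl fun j _ => ?_
  simp only [Complex.star_def, Complex.mul_re, Complex.mul_im, Complex.conj_re, Complex.conj_im,
    Complex.ofReal_re, Complex.ofReal_im]
  ring

theorem PosDef.map_ofReal {R : Matrix ι ι ℝ} (hR : R.PosDef) :
    (R.map ((↑) : ℝ → ℂ)).PosDef := by
  have hherm : (R.map ((↑) : ℝ → ℂ)).IsHermitian :=
    hR.isHermitian.map _ fun x => (Complex.conj_ofReal x).symm
  refine .of_dotProduct_mulVec_pos hherm fun y hy => Complex.pos_iff.2 ⟨?_, ?_⟩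
  · have hparts : (fun i => (y i).re) ≠ 0 ∨ (fun i => (y i).im) ≠ 0 := by
      by_contra! h
      exact hy (funext fun i => Complex.ext (congrFun h.1 i) (congrFun h.2 i))
    rw [re_star_dotProduct_map_ofReal_mulVec]
    rcases hparts with h | h
    · exact add_pos_of_pos_of_nonneg (hR.dotProduct_mulVec_pos h)
        (hR.posSemidef.dotProduct_mulVec_nonneg _)
    · exact add_pos_of_nonneg_of_pos (hR.posSemidef.dotProduct_mulVec_nonneg _)
        (hR.dotProduct_mulVec_pos h)
  · exact (hherm.im_star_dotProduct_mulVec_self y).symm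

theorem re_star_dotProduct_mulVec_pos_of_posDef_of_isSymm {T D : Matrix ι ι ℝ}
    (hT : T.PosDef) (hD : D.IsSymm) {y : ι → ℂ} (hy : y ≠ 0) :
    0 < (star y ⬝ᵥ (T.map ((↑) : ℝ → ℂ) + Complex.I • D.map ((↑) : ℝ → ℂ)) *ᵥ y).re := by
  have hDherm : (D.map ((↑) : ℝ → ℂ)).IsHermitian :=
    IsHermitian.map (by rwa [IsHermitian, conjTranspose_eq_transpose_of_trivial]) _
      fun x => (Complex.conj_ofReal x).symm
  have him : (star y ⬝ᵥ D.map ((↑) : ℝ → ℂ) *ᵥ y).im = 0 :=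
    hDherm.im_star_dotProduct_mulVec_self y
  rw [add_mulVec, dotProduct_add, smul_mulVec, dotProduct_smul, smul_eq_mul, Complex.add_re,
    Complex.I_mul_re, him, neg_zero, add_zero]
  exact (Complex.pos_iff.1 (hT.map_ofReal.dotProduct_mulVec_pos hy)).1

variable [DecidableEq ι]

theorem mulVec_adjugate_col {α : Type*} [CommRing α] (A : Matrix ι ι α) (j : ι) :
    A *ᵥ A.adjugate.col j = A.det • Pi.single j 1 := by
  rw [← mulVec_single_one, mulVec_mulVec, mul_adjugate, smul_mulVec, one_mulVec]

theorem det_ne_zero_of_re_star_dotProduct_mulVec_pos {A : Matrix ι ι ℂ}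
    (hA : ∀ y ≠ 0, 0 < (star y ⬝ᵥ A *ᵥ y).re) : A.det ≠ 0 := fun h => by
  obtain ⟨y, hy, hAy⟩ := exists_mulVec_eq_zero_iff.2 h
  simpa [hAy] using hA y hy

theorem re_det_mul_conj_adjugate_pos {A : Matrix ι ι ℂ}
    (hA : ∀ y ≠ 0, 0 < (star y ⬝ᵥ A *ᵥ y).re) (j : ι) :
    0 < (A.det * conj (A.adjugate j j)).re := by
  have hdet := det_ne_zero_of_re_star_dotProduct_mulVec_pos hA
  have hcol : A.adjugate.col j ≠ 0 := by
    intro h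
    have hlast := congrFun (mulVec_adjugate_col A j) j
    simp only [h, mulVec_zero, Pi.zero_apply, Pi.smul_apply, Pi.single_eq_same, smul_eq_mul,
      mul_one] at hlast
    exact hdet hlast.symm
  simpa [mulVec_adjugate_col, mul_comm] using hA _ hcol

theorem adjugate_last_last {α : Type*} [CommRing α] {m : ℕ}
    (A : Matrix (Fin (m + 1)) (Fin (m + 1)) α) :
    A.adjugate (Fin.last m) (Fin.last m) = (A.submatrix Fin.castSucc Fin.castSucc).det := by
  rw [adjugate_fin_succ_eq_det_submatrix, Fin.succAbove_last, Fin.val_last, ← two_mul,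
    pow_mul, neg_one_sq, one_pow, one_mul]

end Matrix

/-- For `T` real symmetric positive definite and `D` real diagonal, the leading
principal minors `dₘ` of `T + i D` satisfy `Re(dₘ₊₁ · conj dₘ) > 0`. -/
theorem stmt_1 (n : ℕ) (T D : Matrix (Fin n) (Fin n) ℝ)
    (hT : T.PosDef) (hD : ∀ i j : Fin n, i ≠ j → D i j = 0)
    (M : Matrix (Fin n) (Fin n) ℂ)
    (hM : M = T.map (fun x => (x : ℂ)) + Complex.I • D.map (fun x => (x : ℂ)))
    (d : ∀ m : ℕ, m ≤ n → ℂ)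
    (hd : ∀ (m : ℕ) (hm : m ≤ n),
      d m hm = (M.submatrix (Fin.castLE hm) (Fin.castLE hm)).det) :
    ∀ (m : ℕ) (hm : m + 1 ≤ n), 1 ≤ m →
      0 < (d (m + 1) hm * (starRingEnd ℂ) (d m ((Nat.le_succ m).trans hm))).re := by
  intro m hm _
  have hDsymm : D.IsSymm := IsSymm.ext fun i j => by
    rcases eq_or_ne i j with rfl | hij
    · rfl
    · rw [hD i j hij, hD j i hij.symm]
  have hA : ∀ y ≠ 0, 0 < (star y ⬝ᵥ M.submatrix (Fin.castLE hm) (Fin.castLE hm) *ᵥ y).re := by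
    subst hM
    exact fun y hy => re_star_dotProduct_mulVec_pos_of_posDef_of_isSymm
      (hT.submatrix (Fin.castLE_injective hm)) (hDsymm.submatrix _) hy
  have key := re_det_mul_conj_adjugate_pos hA (Fin.last m)
  rw [adjugate_last_last, submatrix_submatrix, ← hd] at key
  rw [hd m]
  exact key
end

section
/- For $u \in (0,1)^n$, let $\Delta_n(u)$ be the $n \times n$ real symmetric matrix $\Delta_n(u) = \sum_{i=1}^n \left[ (E_{ii} + E_{i+1,i+1}) \left( \frac{1}{1-u_i^4} - \frac12 \right) + (E_{i,i+1} + E_{i+1,i}) \frac{-u_i^2}{1-u_i^4} \right]$, where $E_{ij}$ are matrix units and indices are taken modulo $n$. Then $\det \Delta_n(u) = \frac{(1 - u_1^2 u_2^2 \cdots u_n^2)^2}{(1-u_1^4)(1-u_2^4)\cdots(1-u_n^4)}$. -/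
/-!
Writing `S` for the cyclic shift with weights `u i ^ 2` (so `S (i + 1) i = u i ^ 2`) and
`D = diagonal (1 / (1 - u i ^ 4))`, one has `Δ = (1 - S) * D * (1 - S)ᵀ`: the `-1/2` shifts of
the diagonal cancel after reindexing `i ↦ i + 1`. In the Leibniz expansion of `det (1 - S)` only
the identity and the full rotation `i ↦ i + 1` survive, giving `det (1 - S) = 1 - ∏ i, u i ^ 2`.
-/

open Matrix

open Fin.NatCast in
theorem Equiv.Perm.eq_one_or_eq_finRotate {n : ℕ} [NeZero n] (σ : Equiv.Perm (Fin n))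
    (h : ∀ i, σ i = i ∨ σ i = i + 1) : σ = 1 ∨ σ = finRotate n := by
  by_cases hfix : ∀ i, σ i = i
  · exact Or.inl (Equiv.ext hfix)
  push Not at hfix
  obtain ⟨j, hj⟩ := hfix
  have hstep : ∀ i, σ i = i + 1 → σ (i + 1) = i + 1 + 1 := by
    intro i hi
    refine (h (i + 1)).elim (fun hfix => ?_) id
    have hwrap : i + 1 = i := σ.injective (hfix.trans hi.symm)
    rw [hfix]
    exact (congrArg (· + 1) hwrap).symm
  have hshift : ∀ k : ℕ, σ (j + k) = j + k + 1 := by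
    intro k
    induction k with
    | zero => simpa using (h j).resolve_left hj
    | succ k ih => rw [Nat.cast_succ, ← add_assoc, hstep _ ih]
  refine Or.inr (Equiv.ext fun i => ?_)
  simpa [finRotate_apply] using hshift (i - j).val

namespace Matrix

variable {R : Type*} [CommRing R] {n : ℕ} [NeZero n]

def cyclicShift (c : Fin n → R) : Matrix (Fin n) (Fin n) R :=
  of fun j k => if j = k + 1 then c k else 0

@[simp]
theorem cyclicShift_apply (c : Fin n → R) (j k : Fin n) :
    cyclicShift c j k = if j = k + 1 then c k else 0 :=
  rfl

theorem det_one_sub_cyclicShift (c : Fin n → R) : det (1 - cyclicShift c) = 1 - ∏ i, c i := by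
  obtain _ | _ | n := n
  · exact absurd rfl (NeZero.ne 0)
  · simp [det_unique]
  have hsucc_ne : ∀ i : Fin (n + 2), i + 1 ≠ i := fun i h => one_ne_zero (add_eq_left.mp h)
  have hrot : (1 : Equiv.Perm (Fin (n + 2))) ≠ finRotate (n + 2) := fun h =>
    hsucc_ne 0 (by simpa [finRotate_apply] using (congrArg (· 0) h).symm)
  rw [det_apply, Finset.sum_eq_add_of_mem 1 _ (Finset.mem_univ _) (Finset.mem_univ _) hrot]
  · simp only [Equiv.Perm.sign_one, Equiv.Perm.coe_one, id_eq, sub_apply, one_apply_eq,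
      cyclicShift_apply, (hsucc_ne _).symm, ↓reduceIte, sub_zero, Finset.prod_const_one, one_smul,
      sign_finRotate, add_tsub_cancel_right, finRotate_apply, ne_eq, hsucc_ne, not_false_eq_true,
      one_apply_ne, zero_sub, Finset.prod_neg, Finset.card_univ, Fintype.card_fin, Units.smul_def,
      Units.val_pow_eq_pow_val, Units.val_neg, Units.val_one, zsmul_eq_mul, Int.cast_pow,
      Int.cast_neg, Int.cast_one]
    rw [← mul_assoc, ← pow_add, Odd.neg_one_pow ⟨n + 1, by ring⟩]
    ring
  · intro σ _ hσ
    obtain ⟨i, hi, hi'⟩ : ∃ i, σ i ≠ i ∧ σ i ≠ i + 1 := by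
      by_contra! hall
      exact (σ.eq_one_or_eq_finRotate fun i => or_iff_not_imp_left.mpr (hall i)).elim hσ.1 hσ.2
    refine smul_eq_zero_of_right _ (Finset.prod_eq_zero (Finset.mem_univ i) ?_)
    simp [hi, hi']

theorem one_sub_cyclicShift_mul_diagonal_mul_transpose (v d : Fin n → R) :
    (1 - cyclicShift v) * diagonal d * (1 - cyclicShift v)ᵀ =
      ∑ i, (d i • single i i 1 + (d i * v i ^ 2) • single (i + 1) (i + 1) 1
        - (d i * v i) • (single i (i + 1) 1 + single (i + 1) i 1)) := by
  ext j k
  rw [mul_apply, sum_apply]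
  refine Finset.sum_congr rfl fun i _ => ?_
  simp only [mul_diagonal, transpose_apply, sub_apply, one_apply, cyclicShift_apply, add_apply,
    smul_apply, single_apply, smul_eq_mul, ite_and, eq_comm (a := i), eq_comm (a := i + 1)]
  -- an identity between polynomials in the four indicators `[j = i]`, `[j = i + 1]`, `[k = i]`,
  -- `[k = i + 1]`, so it holds case by case even when `i + 1 = i`
  split_ifs <;> ring

theorem cyclicTridiagonal_eq_mul_diagonal_mul_transpose {K : Type*} [Field K] [NeZero (2 : K)]
    (v : Fin n → K) (hv : ∀ i, 1 - v i ^ 2 ≠ 0) :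
    ∑ i, ((1 / (1 - v i ^ 2) - 1 / 2) • (single i i (1 : K) + single (i + 1) (i + 1) 1)
        + (-v i / (1 - v i ^ 2)) • (single i (i + 1) (1 : K) + single (i + 1) i 1)) =
      (1 - cyclicShift v) * diagonal (fun i => 1 / (1 - v i ^ 2)) * (1 - cyclicShift v)ᵀ := by
  have hrotate : ∑ i : Fin n, single (i + 1) (i + 1) (1 : K) = ∑ i, single i i 1 :=
    Equiv.sum_comp (Equiv.addRight (1 : Fin n)) fun i => single i i (1 : K)
  rw [one_sub_cyclicShift_mul_diagonal_mul_transpose, ← sub_eq_zero, ← Finset.sum_sub_distrib]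
  calc _ = ∑ i : Fin n, (1 / 2 : K) • (single (i + 1) (i + 1) (1 : K) - single i i 1) :=
        Finset.sum_congr rfl fun i _ => by
          have hd : 1 / (1 - v i ^ 2) * (1 - v i ^ 2) = 1 := one_div_mul_cancel (hv i)
          have h2 : (2 : K)⁻¹ * 2 = 1 := inv_mul_cancel₀ two_ne_zero
          linear_combination (norm := module) (hd - h2) • single (i + 1) (i + 1) (1 : K)
    _ = 0 := by rw [← Finset.smul_sum, Finset.sum_sub_distrib, hrotate, sub_self, smul_zero]

end Matrix

/-- Determinant of the cyclic tridiagonal matrix `Δₙ(u)`: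
`det Δₙ(u) = (1 - u₁²⋯uₙ²)² / ∏ᵢ (1 - uᵢ⁴)`. -/
theorem stmt_6 (n : ℕ) [NeZero n] (u : Fin n → ℝ) (hu : ∀ i, u i ∈ Set.Ioo (0 : ℝ) 1)
    (Δ : Matrix (Fin n) (Fin n) ℝ)
    (hΔ : Δ = ∑ i : Fin n,
      ((1 / (1 - u i ^ 4) - 1 / 2) •
          (Matrix.single i i (1 : ℝ) + Matrix.single (i + 1) (i + 1) 1)
        + (-(u i ^ 2) / (1 - u i ^ 4)) •
          (Matrix.single i (i + 1) (1 : ℝ) + Matrix.single (i + 1) i 1))) :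
    Δ.det = (1 - ∏ i, u i ^ 2) ^ 2 / ∏ i, (1 - u i ^ 4) := by
  have hpow : ∀ i, u i ^ 4 = (u i ^ 2) ^ 2 := fun i => by ring
  have hv : ∀ i, 1 - (u i ^ 2) ^ 2 ≠ 0 := fun i => by
    obtain ⟨h0, h1⟩ := hu i
    exact sub_ne_zero.mpr
      (pow_lt_one₀ (by positivity) (pow_lt_one₀ h0.le h1 two_ne_zero) two_ne_zero).ne'
  simp only [hpow] at hΔ ⊢
  rw [hΔ, cyclicTridiagonal_eq_mul_diagonal_mul_transpose (fun i => u i ^ 2) hv, det_mul, det_mul,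
    det_transpose, det_one_sub_cyclicShift, det_diagonal, Finset.prod_div_distrib,
    Finset.prod_const_one]
  ring
end

section
/- For $u \in (0,1)^n$, the matrix $\Delta_n(u)$ defined by $\Delta_n(u) = \sum_{i=1}^n \left[ (E_{ii} + E_{i+1,i+1}) \left( \frac{1}{1-u_i^4} - \frac12 \right) + (E_{i,i+1} + E_{i+1,i}) \frac{-u_i^2}{1-u_i^4} \right]$ (indices modulo $n$) is positive definite. -/
open Matrix

/-!
Each summand of `Δₙ(u)` is a `2 × 2` block `[[a, -b], [-b, a]]` on the coordinates `i, i + 1`,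
with `a = 1 / (1 - u⁴) - 1 / 2` and `b = u² / (1 - u⁴)`. Since `2 b xy ≤ b (x² + y²)`, such a
block contributes at least `(a - b)(x_i² + x_{i+1}²)` to the quadratic form, and
`a - b = (1 - u²)² / (2 (1 - u⁴)) > 0`. Every coordinate belongs to some block, so the form is
positive at every `x ≠ 0`.
-/

section EdgeMatrix

variable {ι : Type*} [DecidableEq ι]

def edgeMatrix (i j : ι) (a b : ℝ) : Matrix ι ι ℝ :=
  a • (single i i 1 + single j j 1) + b • (single i j 1 + single j i 1)

theorem isHermitian_edgeMatrix (i j : ι) (a b : ℝ) : (edgeMatrix i j a b).IsHermitian := by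
  simp only [IsHermitian, edgeMatrix, conjTranspose_add, conjTranspose_smul, conjTranspose_single,
    star_trivial, add_comm (single j i (1 : ℝ))]

variable [Fintype ι]

theorem dotProduct_single_one_mulVec {R : Type*} [CommSemiring R] (i j : ι) (x : ι → R) :
    x ⬝ᵥ (single i j 1 *ᵥ x) = x i * x j := by
  rw [single_mulVec_eq, dotProduct_smul, dotProduct_single, smul_eq_mul]
  ring

theorem dotProduct_edgeMatrix_mulVec (i j : ι) (a b : ℝ) (x : ι → ℝ) :
    x ⬝ᵥ (edgeMatrix i j a b *ᵥ x) = a * (x i ^ 2 + x j ^ 2) + 2 * b * (x i * x j) := by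
  simp only [edgeMatrix, add_mulVec, smul_mulVec, dotProduct_add, dotProduct_smul,
    dotProduct_single_one_mulVec, smul_eq_mul]
  ring

theorem sub_abs_mul_le_dotProduct_edgeMatrix_mulVec (i j : ι) (a b : ℝ) (x : ι → ℝ) :
    (a - |b|) * (x i ^ 2 + x j ^ 2) ≤ x ⬝ᵥ (edgeMatrix i j a b *ᵥ x) := by
  have hcross : |2 * b * (x i * x j)| ≤ |b| * (x i ^ 2 + x j ^ 2) := by
    have := two_mul_le_add_sq |x i| |x j|
    rw [sq_abs, sq_abs] at this
    rw [abs_mul, abs_mul, abs_two, abs_mul]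
    nlinarith [abs_nonneg b]
  rw [dotProduct_edgeMatrix_mulVec]
  linarith [(abs_le.1 hcross).1]

theorem posDef_sum_edgeMatrix {κ : Type*} [Fintype κ] (p q : κ → ι)
    (hp : Function.Surjective p) (a b : κ → ℝ) (hab : ∀ k, |b k| < a k) :
    (∑ k, edgeMatrix (p k) (q k) (a k) (b k)).PosDef := by
  refine posDef_iff_dotProduct_mulVec.2
    ⟨isSelfAdjoint_sum _ fun k _ ↦ isHermitian_edgeMatrix _ _ _ _, fun x hx ↦ ?_⟩
  obtain ⟨v, hv⟩ := Function.ne_iff.mp hx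
  obtain ⟨k, rfl⟩ := hp v
  have hterm (l : κ) : (a l - |b l|) * (x (p l) ^ 2 + x (q l) ^ 2)
      ≤ x ⬝ᵥ (edgeMatrix (p l) (q l) (a l) (b l) *ᵥ x) :=
    sub_abs_mul_le_dotProduct_edgeMatrix_mulVec _ _ _ _ _
  have hgap (l : κ) : 0 < a l - |b l| := sub_pos.2 (hab l)
  have hnonneg (l : κ) : 0 ≤ (a l - |b l|) * (x (p l) ^ 2 + x (q l) ^ 2) := by
    have := hgap l
    positivity
  have hpos : 0 < (a k - |b k|) * (x (p k) ^ 2 + x (q k) ^ 2) :=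
    mul_pos (hgap k) (add_pos_of_pos_of_nonneg (sq_pos_of_ne_zero hv) (sq_nonneg _))
  rw [star_trivial, sum_mulVec, dotProduct_sum]
  exact Finset.sum_pos' (fun l _ ↦ (hnonneg l).trans (hterm l))
    ⟨k, Finset.mem_univ _, hpos.trans_le (hterm k)⟩

end EdgeMatrix

theorem abs_neg_sq_div_one_sub_pow_four_lt {u : ℝ} (hu₀ : 0 < u) (hu₁ : u < 1) :
    |-(u ^ 2) / (1 - u ^ 4)| < 1 / (1 - u ^ 4) - 1 / 2 := by
  have hu4 : 0 < 1 - u ^ 4 := sub_pos.2 (pow_lt_one₀ hu₀.le hu₁ (by norm_num))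
  have hgap : 1 / (1 - u ^ 4) - 1 / 2 - u ^ 2 / (1 - u ^ 4)
      = (1 - u ^ 2) ^ 2 / (2 * (1 - u ^ 4)) := by
    field_simp
    ring
  rw [abs_div, abs_neg, abs_of_pos (by positivity), abs_of_pos hu4, ← sub_pos, hgap]
  have : u ^ 2 < 1 := pow_lt_one₀ hu₀.le hu₁ (by norm_num)
  exact div_pos (pow_pos (by linarith) 2) (by linarith)

/-- The cyclic tridiagonal matrix `Δₙ(u)` is positive definite for `u ∈ (0,1)ⁿ`. -/
theorem stmt_7 (n : ℕ) [NeZero n] (u : Fin n → ℝ) (hu : ∀ i, u i ∈ Set.Ioo (0 : ℝ) 1)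
    (Δ : Matrix (Fin n) (Fin n) ℝ)
    (hΔ : Δ = ∑ i : Fin n,
      ((1 / (1 - u i ^ 4) - 1 / 2) •
          (Matrix.single i i (1 : ℝ) + Matrix.single (i + 1) (i + 1) 1)
        + (-(u i ^ 2) / (1 - u i ^ 4)) •
          (Matrix.single i (i + 1) (1 : ℝ) + Matrix.single (i + 1) i 1))) :
    Δ.PosDef :=
  hΔ ▸ posDef_sum_edgeMatrix id (· + 1) Function.surjective_id _ _
    fun i ↦ abs_neg_sq_div_one_sub_pow_four_lt (hu i).1 (hu i).2
end

section
/- Fix real numbers $\alpha, \beta > 0$ and $q > 0$, and set $a_1 = \alpha^{-1}$, $a_2 = \beta^{-1}$. For real numbers $x_1, \dots, x_n$, let $t_j = q x_j^2 / 2$ and define $\mathbf{B}(x_1, \dots, x_n) = \sum_{k_1, \dots, k_n \in \{1,2\}} a_{k_1} \cdots a_{k_n} \prod_{m=1}^n \cos\left( t_m - t_{m+1} + \frac{k_{m+1} - k_m}{2} \pi \right)$, where indices are cyclic ($k_{n+1} = k_1$, $t_{n+1} = t_1$). Then $\mathbf{B}(x_1, \dots, x_n) = 2 \left( \frac{\alpha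 + \beta}{2\alpha\beta} \right)^n \left\{ 1 + \sum_{0 < 2k \le n} \left( \frac{\alpha - \beta}{\alpha + \beta} \right)^{2k} \sum_{1 \le j_1 < j_2 < \dots < j_{2k} \le n} \cos\left( q \sum_{r=1}^{2k} (-1)^r x_{j_r}^2 \right) \right\}$. -/
/-!
Write each cosine as `(e^{iφ} + e^{-iφ}) / 2 = ∑_{s = ±1} e^{isφ} / 2` and expand the product
over `m`: this turns `𝐁` into a sum over cyclic sign sequences `ε` and over `k`. Summation by parts
on the cycle splits the phase `∑ ε_m φ_m` into `∑ t_m (ε_m - ε_{m-1})` and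
`(π/2) ∑ k_m (ε_{m-1} - ε_m)`; the second part equals `∏ (ε_{m-1} ε_m)^{k_m}`, so the sum over `k`
factors into `∏_m (a₂ + a₁ ε_{m-1} ε_m) / 2`, which is `(a₁ + a₂)/2` where `ε` keeps its sign and
`(a₂ - a₁)/2` where it flips. A cyclic sign sequence is determined by its last value `σ` and its set
`C` of sign changes, which has even size; its phase is then `σ ∑_r (-1)^{r+1} 2 t_{j_r}` for the
increasing enumeration `j` of `C`, and the two values of `σ` add up to `2 cos`. Grouping the sets
`C` by their size `2k` gives the formula.
-/

open scoped Classical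

open Finset Complex

lemma sum_even_card_eq {α M : Type*} [Fintype α] [AddCommMonoid M] (f : Finset α → M) :
    ∑ C : Finset α with Even #C, f C
      = f ∅ + ∑ k ∈ Icc 1 (Fintype.card α / 2), ∑ C : Finset α with #C = 2 * k, f C := by
  have hfiber : ∀ k, {C ∈ ({C | Even #C} : Finset (Finset α)) | #C / 2 = k}
      = ({C | #C = 2 * k} : Finset (Finset α)) :=
    fun k => by ext C; simp only [mem_filter, mem_univ, true_and, Nat.even_iff]; omega
  have hmaps : ∀ C ∈ ({C | Even #C} : Finset (Finset α)), #C / 2 ∈ Icc 0 (Fintype.card α / 2) :=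
    fun C _ => mem_Icc.mpr ⟨Nat.zero_le _, Nat.div_le_div_right (card_le_univ C)⟩
  rw [← sum_fiberwise_of_maps_to hmaps, ← insert_Icc_add_one_left_eq_Icc (Nat.zero_le _),
    sum_insert (by simp)]
  simp only [hfiber, zero_add, mul_zero, card_eq_zero, filter_eq', mem_univ, if_true, sum_singleton]

lemma sum_card_eq_sum_strictMono {α M : Type*} [Fintype α] [LinearOrder α] [AddCommMonoid M]
    (k : ℕ) (f : Finset α → M) :
    ∑ C : Finset α with #C = k, f C = ∑ j : Fin k → α with StrictMono j, f (univ.image j) := by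
  have hcard : ∀ j : Fin k → α, StrictMono j → #(univ.image j) = k := fun j hj => by
    rw [card_image_of_injective _ hj.injective, card_univ, Fintype.card_fin]
  have hemb : ∀ j : Fin k → α, (hj : StrictMono j) →
      j = (univ.image j).orderEmbOfFin (hcard j hj) :=
    fun j hj => orderEmbOfFin_unique _ (fun r => mem_image_of_mem j (mem_univ r)) hj
  refine (sum_nbij (fun j => univ.image j) ?_ ?_ ?_ fun _ _ => rfl).symm
  · intro j hj
    simp only [mem_filter, mem_univ, true_and] at hj ⊢
    exact hcard j hj
  · intro j hj j' hj' h
    simp only [coe_filter, mem_univ, true_and, Set.mem_ofPred_eq] at hj hj'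
    rw [hemb j hj, hemb j' hj']
    simp only [h]
  · intro C hC
    simp only [coe_filter, mem_univ, true_and, Set.mem_ofPred_eq] at hC
    exact ⟨C.orderEmbOfFin hC, by simp [(C.orderEmbOfFin hC).strictMono]⟩

lemma card_filter_le_image_strictMono {α : Type*} [LinearOrder α] {k : ℕ} {j : Fin k → α}
    (hj : StrictMono j) (r : Fin k) : #{c ∈ univ.image j | c ≤ j r} = r + 1 := by
  rw [filter_image, card_image_of_injective _ hj.injective]
  simp only [hj.le_iff_le]
  rw [← Fin.card_Iic]
  congr 1
  ext s
  simp

lemma sum_units_int {M : Type*} [AddCommMonoid M] (f : ℤˣ → M) : ∑ s, f s = f 1 + f (-1) := by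
  rw [show (univ : Finset ℤˣ) = {1, -1} by decide, sum_pair (by decide)]

lemma ofReal_cos_eq_sum_units (φ : ℝ) :
    (Real.cos φ : ℂ) = ∑ s : ℤˣ, cexp ((s : ℂ) * φ * I) / 2 := by
  rw [sum_units_int, ofReal_cos, cos]
  push_cast
  ring_nf

lemma exp_natCast_mul_units_sub (κ : ℕ) (e e' : ℤˣ) :
    cexp (κ * ((e' : ℂ) - e) * (Real.pi / 2) * I) = ((e' * e : ℤˣ) : ℂ) ^ κ := by
  have hpi : cexp (Real.pi * I) = -1 := exp_pi_mul_I
  rcases Int.units_eq_one_or e with rfl | rfl <;> rcases Int.units_eq_one_or e' with rfl | rfl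
  · simp
  · rw [show (κ : ℂ) * (((-1 : ℤˣ) : ℤ) - ((1 : ℤˣ) : ℤ)) * (Real.pi / 2) * I
        = κ * -(Real.pi * I) by push_cast; ring, exp_nat_mul, exp_neg, hpi]
    simp
  · rw [show (κ : ℂ) * (((1 : ℤˣ) : ℤ) - ((-1 : ℤˣ) : ℤ)) * (Real.pi / 2) * I
        = κ * (Real.pi * I) by push_cast; ring, exp_nat_mul, hpi]
    simp
  · simp

lemma sum_one_two_mul_units_pow (a : ℕ → ℝ) (δ : ℤˣ) :
    ∑ κ ∈ ({1, 2} : Finset ℕ), (a κ / 2 : ℂ) * (δ : ℂ) ^ κ = (a 2 + a 1 * δ) / 2 := by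
  rcases Int.units_eq_one_or δ with rfl | rfl <;> simp <;> ring

section CyclicSigns

variable {n : ℕ}

def signsOfChanges (σ : ℤˣ) (C : Finset (Fin n)) (m : Fin n) : ℤˣ :=
  σ * (-1) ^ #{c ∈ C | c ≤ m}

def alternatingPhase (t : Fin n → ℝ) (C : Finset (Fin n)) : ℝ :=
  ∑ m ∈ C, 2 * t m * (-1) ^ #{c ∈ C | c ≤ m}

lemma alternatingPhase_image_strictMono (t : Fin n → ℝ) {k : ℕ} {j : Fin k → Fin n}
    (hj : StrictMono j) :
    alternatingPhase t (univ.image j) = ∑ r, 2 * t (j r) * (-1) ^ ((r : ℕ) + 1) := by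
  rw [alternatingPhase, sum_image fun _ _ _ _ h => hj.injective h]
  simp only [card_filter_le_image_strictMono hj]

variable [NeZero n]

-- `m - 1` is taken in `Fin n`, so `0 - 1 = n - 1`: sign changes are counted around the cycle.
def signChanges (ε : Fin n → ℤˣ) : Finset (Fin n) := {m | ε (m - 1) ≠ ε m}

lemma eq_mul_ite_mem_signChanges (ε : Fin n → ℤˣ) (m : Fin n) :
    ε m = ε (m - 1) * if m ∈ signChanges ε then -1 else 1 := by
  by_cases h : ε (m - 1) = ε m <;> simp [signChanges, h]
  rw [Int.units_ne_iff_eq_neg.mp h, neg_neg]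

lemma signChanges_eq_of_eq_mul {ε : Fin n → ℤˣ} {C : Finset (Fin n)}
    (h : ∀ m, ε m = ε (m - 1) * if m ∈ C then -1 else 1) : signChanges ε = C := by
  ext m
  by_cases hm : m ∈ C <;> simp [signChanges, h m, hm]

lemma even_card_signChanges (ε : Fin n → ℤˣ) : Even #(signChanges ε) := by
  have hprod : ∏ m, ε (m - 1) = ∏ m, ε m :=
    Fintype.prod_equiv (Equiv.subRight 1) _ _ fun _ => rfl
  -- once around the cycle, `ε` flips `#(signChanges ε)` times and comes back to itself
  have h : ∏ m, ε m = (∏ m, ε m) * (-1) ^ #(signChanges ε) := by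
    conv_lhs => rw [prod_congr rfl fun m _ => eq_mul_ite_mem_signChanges ε m]
    rw [prod_mul_distrib, hprod, prod_ite_mem, univ_inter, prod_const]
  rw [← neg_one_pow_eq_one_iff_even (by decide : (-1 : ℤˣ) ≠ 1)]
  simpa using h

lemma card_filter_le_eq_add {C : Finset (Fin n)} {m : Fin n} (hm : m ≠ 0) :
    #{c ∈ C | c ≤ m} = #{c ∈ C | c ≤ m - 1} + if m ∈ C then 1 else 0 := by
  have hval : (m - 1 : Fin n).val + 1 = m.val := by
    rw [Fin.val_sub_one_of_ne_zero hm]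
    exact Nat.sub_add_cancel (Nat.one_le_iff_ne_zero.mpr (Fin.val_ne_zero_iff.mpr hm))
  have hsplit : {c ∈ C | c ≤ m} = {c ∈ C | c ≤ m - 1} ∪ {c ∈ C | c = m} := by
    ext c
    simp only [mem_filter, mem_union, Fin.le_def, ← Fin.val_inj]
    rw [← and_or_left]
    generalize (m - 1 : Fin n).val = p at hval ⊢
    exact and_congr_right fun _ => by omega
  rw [hsplit, card_union_of_disjoint, filter_eq']
  · split_ifs <;> simp
  · refine disjoint_filter.mpr fun c _ hc hcm => ?_
    rw [Fin.le_def, hcm] at hc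
    generalize (m - 1 : Fin n).val = p at hval hc
    omega

lemma signsOfChanges_neg_one {C : Finset (Fin n)} (hC : Even #C) (σ : ℤˣ) :
    signsOfChanges σ C (-1) = σ := by
  obtain ⟨n, rfl⟩ := Nat.exists_eq_succ_of_ne_zero (NeZero.ne n)
  have : {c ∈ C | c ≤ -1} = C := filter_true_of_mem fun c _ => by
    rw [Fin.le_def, Fin.coe_neg_one]; exact Nat.lt_succ_iff.mp c.isLt
  rw [signsOfChanges, this, hC.neg_one_pow, mul_one]

lemma signsOfChanges_eq_mul {C : Finset (Fin n)} (hC : Even #C) (σ : ℤˣ) (m : Fin n) :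
    signsOfChanges σ C m = signsOfChanges σ C (m - 1) * if m ∈ C then -1 else 1 := by
  by_cases hm : m = 0
  · subst hm
    have : {c ∈ C | c ≤ 0} = {c ∈ C | c = 0} := by simp only [nonpos_iff_eq_zero]
    rw [zero_sub, signsOfChanges_neg_one hC, signsOfChanges, this, filter_eq']
    split_ifs <;> simp
  · rw [signsOfChanges, signsOfChanges, card_filter_le_eq_add hm, pow_add, mul_assoc]
    split_ifs <;> simp

lemma signChanges_signsOfChanges {C : Finset (Fin n)} (hC : Even #C) (σ : ℤˣ) :
    signChanges (signsOfChanges σ C) = C :=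
  signChanges_eq_of_eq_mul (signsOfChanges_eq_mul hC σ)

lemma signsOfChanges_signChanges (ε : Fin n → ℤˣ) :
    signsOfChanges (ε (-1)) (signChanges ε) = ε := by
  have step : ∀ m, signsOfChanges (ε (-1)) (signChanges ε) (m - 1) = ε (m - 1) →
      signsOfChanges (ε (-1)) (signChanges ε) m = ε m := fun m h => by
    rw [signsOfChanges_eq_mul (even_card_signChanges ε), h, ← eq_mul_ite_mem_signChanges]
  funext m
  induction hv : m.val generalizing m with
  | zero =>
    obtain rfl : m = 0 := Fin.ext (by simpa using hv)
    exact step 0 (by rw [zero_sub, signsOfChanges_neg_one (even_card_signChanges ε)])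
  | succ v ih =>
    have hm : m ≠ 0 := by rintro rfl; simp at hv
    exact step m (ih _ (by rw [Fin.val_sub_one_of_ne_zero hm, hv, Nat.add_sub_cancel]))

lemma sum_eq_sum_signsOfChanges {M : Type*} [AddCommMonoid M] (F : (Fin n → ℤˣ) → M) :
    ∑ ε, F ε = ∑ σ : ℤˣ, ∑ C with Even #C, F (signsOfChanges σ C) := by
  rw [← sum_product']
  refine (sum_nbij' (fun p => signsOfChanges p.1 p.2) (fun ε => (ε (-1), signChanges ε))
    ?_ ?_ ?_ ?_ ?_).symm
  · simp
  · simp [even_card_signChanges, Int.units_eq_one_or]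
  · rintro ⟨σ, C⟩ h
    simp only [mem_product, mem_filter] at h
    simp [signsOfChanges_neg_one h.2.2, signChanges_signsOfChanges h.2.2]
  · intro ε _
    exact signsOfChanges_signChanges ε
  · simp

lemma prod_apply_sub_one_mul_eq {M : Type*} [CommMonoid M] (f : ℤˣ → M) (ε : Fin n → ℤˣ) :
    ∏ m, f (ε (m - 1) * ε m) = f (-1) ^ #(signChanges ε) * f 1 ^ (n - #(signChanges ε)) := by
  have h : ∀ m, ε (m - 1) * ε m = if m ∈ signChanges ε then -1 else 1 := fun m => by
    conv_lhs => rw [eq_mul_ite_mem_signChanges ε m, ← mul_assoc, Int.units_mul_self, one_mul]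
  simp only [h, apply_ite f, prod_ite, prod_const, filter_mem_eq_inter, univ_inter, filter_not,
    ← compl_eq_univ_sdiff, card_compl, Fintype.card_fin]

lemma sum_by_parts_cyclic {R : Type*} [CommRing R] (f g : Fin n → R) :
    ∑ m, f m * (g (m + 1) - g m) = ∑ m, g m * (f (m - 1) - f m) := by
  have hshift : ∑ m, f m * g (m + 1) = ∑ m, f (m - 1) * g m :=
    Fintype.sum_equiv (Equiv.addRight 1) _ _ fun m => by simp
  simp only [mul_sub, sum_sub_distrib, hshift]
  rw [← sum_sub_distrib, ← sum_sub_distrib]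
  exact sum_congr rfl fun m _ => by ring

def signPhase (t : Fin n → ℝ) (ε : Fin n → ℤˣ) : ℝ := ∑ m, t m * (ε m - ε (m - 1))

lemma sum_units_mul_angle_eq (t : Fin n → ℝ) (k : Fin n → ℕ) (ε : Fin n → ℤˣ) :
    ∑ m, (ε m : ℂ) * ((t m - t (m + 1) + ((k (m + 1) : ℝ) - k m) / 2 * Real.pi : ℝ) : ℂ)
      = signPhase t ε + ∑ m, k m * ((ε (m - 1) : ℂ) - ε m) * (Real.pi / 2) := by
  have ht := sum_by_parts_cyclic (fun m => (ε m : ℂ)) (fun m => (t m : ℂ))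
  have hk := sum_by_parts_cyclic (fun m => (ε m : ℂ)) (fun m => (k m : ℂ))
  calc _ = -∑ m, (ε m : ℂ) * (t (m + 1) - t m)
        + Real.pi / 2 * ∑ m, (ε m : ℂ) * (k (m + 1) - k m) := by
        rw [mul_sum, ← sum_neg_distrib, ← sum_add_distrib]
        push_cast
        exact sum_congr rfl fun m _ => by ring
    _ = _ := by
        rw [ht, hk, signPhase, mul_sum, ← sum_neg_distrib, ← sum_add_distrib]
        push_cast
        rw [← sum_add_distrib]
        exact sum_congr rfl fun m _ => by ring

lemma prod_exp_units_mul_angle (t : Fin n → ℝ) (k : Fin n → ℕ) (ε : Fin n → ℤˣ) :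
    ∏ m, cexp ((ε m : ℂ) * ((t m - t (m + 1) + ((k (m + 1) : ℝ) - k m) / 2 * Real.pi : ℝ) : ℂ) * I)
      = cexp (signPhase t ε * I) * ∏ m, ((ε (m - 1) * ε m : ℤˣ) : ℂ) ^ k m := by
  rw [← exp_sum, ← sum_mul, sum_units_mul_angle_eq, add_mul, exp_add, sum_mul, exp_sum]
  simp only [exp_natCast_mul_units_sub]

lemma sum_prod_cos_eq_sum_signs (a : ℕ → ℝ) (t : Fin n → ℝ) :
    ((∑ k ∈ Fintype.piFinset (fun _ : Fin n => ({1, 2} : Finset ℕ)), ∏ m : Fin n,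
        a (k m) * Real.cos (t m - t (m + 1) + ((k (m + 1) : ℝ) - (k m : ℝ)) / 2 * Real.pi) : ℝ) : ℂ)
      = ∑ ε : Fin n → ℤˣ,
          (∏ m, (a 2 + a 1 * ((ε (m - 1) * ε m : ℤˣ) : ℂ)) / 2) * cexp (signPhase t ε * I) := by
  calc _ = ∑ k ∈ Fintype.piFinset (fun _ : Fin n => ({1, 2} : Finset ℕ)), ∑ ε : Fin n → ℤˣ,
        ∏ m, (a (k m) / 2 : ℂ) * cexp ((ε m : ℂ) *
          ((t m - t (m + 1) + ((k (m + 1) : ℝ) - k m) / 2 * Real.pi : ℝ) : ℂ) * I) := by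
        rw [ofReal_sum]
        refine sum_congr rfl fun k _ => ?_
        simp only [ofReal_prod, ofReal_mul, ofReal_cos_eq_sum_units, mul_sum, Fintype.prod_sum,
          mul_div_assoc', div_mul_eq_mul_div]
    _ = ∑ ε : Fin n → ℤˣ, cexp (signPhase t ε * I) *
          ∑ k ∈ Fintype.piFinset (fun _ : Fin n => ({1, 2} : Finset ℕ)),
            ∏ m, (a (k m) / 2 : ℂ) * ((ε (m - 1) * ε m : ℤˣ) : ℂ) ^ k m := by
        rw [sum_comm]
        refine sum_congr rfl fun ε _ => ?_
        rw [mul_sum]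
        refine sum_congr rfl fun k _ => ?_
        rw [prod_mul_distrib, prod_exp_units_mul_angle, prod_mul_distrib]
        ring
    _ = _ := by
        refine sum_congr rfl fun ε _ => ?_
        rw [mul_comm, ← prod_univ_sum (fun _ => ({1, 2} : Finset ℕ))
          (fun m κ => (a κ / 2 : ℂ) * ((ε (m - 1) * ε m : ℤˣ) : ℂ) ^ κ)]
        simp only [sum_one_two_mul_units_pow]

lemma signPhase_eq_sum_signChanges (t : Fin n → ℝ) (ε : Fin n → ℤˣ) :
    signPhase t ε = ∑ m ∈ signChanges ε, 2 * t m * ε m := by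
  rw [signChanges, sum_filter, signPhase]
  refine sum_congr rfl fun m _ => ?_
  split_ifs with h
  · rw [Int.units_ne_iff_eq_neg.mp h]
    push_cast
    ring
  · rw [not_not.mp h, sub_self, mul_zero]

lemma signPhase_signsOfChanges (t : Fin n → ℝ) {C : Finset (Fin n)} (hC : Even #C) (σ : ℤˣ) :
    signPhase t (signsOfChanges σ C) = σ * alternatingPhase t C := by
  rw [signPhase_eq_sum_signChanges, signChanges_signsOfChanges hC, alternatingPhase, mul_sum]
  refine sum_congr rfl fun m _ => ?_
  simp only [signsOfChanges]
  push_cast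
  ring

lemma sum_prod_cos_eq_sum_even_card (a : ℕ → ℝ) (t : Fin n → ℝ) :
    ∑ k ∈ Fintype.piFinset (fun _ : Fin n => ({1, 2} : Finset ℕ)), ∏ m : Fin n,
        a (k m) * Real.cos (t m - t (m + 1) + ((k (m + 1) : ℝ) - (k m : ℝ)) / 2 * Real.pi)
      = ∑ C : Finset (Fin n) with Even #C,
          ((a 2 - a 1) / 2) ^ #C * ((a 1 + a 2) / 2) ^ (n - #C) *
            (2 * Real.cos (alternatingPhase t C)) := by
  apply ofReal_injective
  rw [sum_prod_cos_eq_sum_signs, sum_eq_sum_signsOfChanges, sum_comm, ofReal_sum]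
  refine sum_congr rfl fun C hC => ?_
  have hC : Even #C := (mem_filter.mp hC).2
  simp only [prod_apply_sub_one_mul_eq (fun δ : ℤˣ => ((a 2 : ℂ) + a 1 * (δ : ℂ)) / 2),
    signChanges_signsOfChanges hC, signPhase_signsOfChanges t hC, sum_units_int]
  push_cast [ofReal_cos, cos]
  ring_nf

end CyclicSigns

theorem stmt_9_general (n : ℕ) [NeZero n] (α β q : ℝ) (hα : 0 < α) (hβ : 0 < β)
    (x : Fin n → ℝ) (a : ℕ → ℝ) (ha : a = fun k => if k = 1 then α⁻¹ else β⁻¹)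
    (t : Fin n → ℝ) (ht : t = fun j => q * x j ^ 2 / 2)
    (B : ℝ) (hB : B = ∑ k ∈ Fintype.piFinset (fun _ : Fin n => ({1, 2} : Finset ℕ)),
      ∏ m : Fin n,
        a (k m) * Real.cos (t m - t (m + 1) + ((k (m + 1) : ℝ) - (k m : ℝ)) / 2 * Real.pi)) :
    B = 2 * ((α + β) / (2 * α * β)) ^ n *
      (1 + ∑ k ∈ Finset.Icc 1 (n / 2), ((α - β) / (α + β)) ^ (2 * k) *
        ∑ j ∈ Finset.univ.filter (fun j : Fin (2 * k) → Fin n => StrictMono j),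
          Real.cos (q * ∑ r : Fin (2 * k), (-1 : ℝ) ^ ((r : ℕ) + 1) * x (j r) ^ 2)) := by
  have ha1 : a 1 = α⁻¹ := by simp [ha]
  have ha2 : a 2 = β⁻¹ := by simp [ha]
  have hweight : ∀ C : Finset (Fin n), ((a 2 - a 1) / 2) ^ #C * ((a 1 + a 2) / 2) ^ (n - #C)
      = ((α - β) / (α + β)) ^ #C * ((α + β) / (2 * α * β)) ^ n := fun C => by
    have hv : (a 2 - a 1) / 2 = (α - β) / (α + β) * ((α + β) / (2 * α * β)) := by
      rw [ha1, ha2]; field_simp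
    have hu : (a 1 + a 2) / 2 = (α + β) / (2 * α * β) := by rw [ha1, ha2]; field_simp; ring
    rw [hu, hv, mul_pow, mul_assoc, ← pow_add, Nat.add_sub_cancel' (by simpa using card_le_univ C)]
  rw [hB, sum_prod_cos_eq_sum_even_card, sum_even_card_eq, Fintype.card_fin]
  simp only [hweight]
  simp only [card_empty, pow_zero, one_mul, show alternatingPhase t ∅ = 0 from sum_empty,
    Real.cos_zero]
  rw [mul_add, mul_sum]
  congr 1
  · ring
  refine sum_congr rfl fun k _ => ?_
  rw [sum_card_eq_sum_strictMono, mul_sum, mul_sum]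
  refine sum_congr rfl fun j hj => ?_
  have hj : StrictMono j := (mem_filter.mp hj).2
  rw [card_image_of_injective _ hj.injective, card_univ, Fintype.card_fin,
    alternatingPhase_image_strictMono t hj, ht, mul_sum]
  ring_nf

/-- Expansion of the trace `𝐁(x₁,…,xₙ)` of the product of the matrices `B(xᵢ,xᵢ₊₁)`
into a sum of cosines (Lemma on the integrand of 𝐅). -/
theorem stmt_9 (n : ℕ) [NeZero n] (α β q : ℝ) (hα : 0 < α) (hβ : 0 < β) (hq : 0 < q)
    (x : Fin n → ℝ) (a : ℕ → ℝ) (ha : a = fun k => if k = 1 then α⁻¹ else β⁻¹)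
    (t : Fin n → ℝ) (ht : t = fun j => q * x j ^ 2 / 2)
    (B : ℝ) (hB : B = ∑ k ∈ Fintype.piFinset (fun _ : Fin n => ({1, 2} : Finset ℕ)),
      ∏ m : Fin n,
        a (k m) * Real.cos (t m - t (m + 1) + ((k (m + 1) : ℝ) - (k m : ℝ)) / 2 * Real.pi)) :
    B = 2 * ((α + β) / (2 * α * β)) ^ n *
      (1 + ∑ k ∈ Finset.Icc 1 (n / 2), ((α - β) / (α + β)) ^ (2 * k) *
        ∑ j ∈ Finset.univ.filter (fun j : Fin (2 * k) → Fin n => StrictMono j),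
          Real.cos (q * ∑ r : Fin (2 * k), (-1 : ℝ) ^ ((r : ℕ) + 1) * x (j r) ^ 2)) :=
  stmt_9_general n α β q hα hβ x a ha t ht B hB
end

section
/- Let $n \ge 2$ and $1 \le r < n$, and consider the consecutive (cyclic) block of indices strictly between two deleted positions $a$ and $a + r$ of $\Delta_n(u)$. Then the determinant of the tridiagonal matrix with diagonal entries $\frac{1}{1-u_{i-1}^4} + \frac{1}{1-u_i^4} - 1$ for $i = a+1, \dots, a+r-1$ and off-diagonal entries $\frac{-u_i^2}{1-u_i^4}$ equals $\frac{1 - u_a^4 u_{a+1}^4 \cdots u_{a+r-1}^4}{(1-u_a^4)(1-u_{a+1}^4) \cdots (1-u_{a+r-1}^4)}$. -/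
open Matrix Finset

private noncomputable def Tm (w : ℕ → ℝ) (n k : ℕ) : Matrix (Fin n) (Fin n) ℝ :=
  Matrix.of fun a b =>
    if a = b then 1 / (1 - w (k + a) ^ 4) + 1 / (1 - w (k + a + 1) ^ 4) - 1
    else if (a : ℕ) + 1 = (b : ℕ) then -(w (k + b) ^ 2) / (1 - w (k + b) ^ 4)
    else if (b : ℕ) + 1 = (a : ℕ) then -(w (k + a) ^ 2) / (1 - w (k + a) ^ 4)
    else 0

private lemma subA (w : ℕ → ℝ) (n k : ℕ) :
    (Tm w (n + 2) k).submatrix Fin.succ Fin.succ = Tm w (n + 1) (k + 1) := by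
  ext a b
  simp only [Tm, Matrix.submatrix_apply, Matrix.of_apply, Fin.ext_iff, Fin.val_succ]
  split_ifs <;> first | rfl | omega |
    simp [Nat.add_comm, Nat.add_left_comm, Nat.add_assoc]

private lemma subB (w : ℕ → ℝ) (n k : ℕ) :
    ((Tm w (n + 2) k).submatrix Fin.succ ((1 : Fin (n + 2)).succAbove)).submatrix
      Fin.succ Fin.succ = Tm w n (k + 2) := by
  ext a b
  simp only [Tm, Matrix.submatrix_apply, Matrix.of_apply, Fin.one_succAbove_succ,
    Fin.ext_iff, Fin.val_succ]
  split_ifs <;> first | rfl | omega |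
    simp [Nat.add_comm, Nat.add_left_comm, Nat.add_assoc]

private lemma key (w : ℕ → ℝ) (hw : ∀ i, w i ∈ Set.Ioo (0 : ℝ) 1) :
    ∀ n k, (Tm w n k).det =
      (1 - ∏ i ∈ Finset.range (n + 1), w (k + i) ^ 4) /
        ∏ i ∈ Finset.range (n + 1), (1 - w (k + i) ^ 4) := by
  have hpos : ∀ i, 0 < 1 - w i ^ 4 := by
    intro i
    have h := hw i
    nlinarith [h.1, h.2, pow_pos h.1 4, pow_lt_one₀ h.1.le h.2 (by norm_num : (4:ℕ) ≠ 0)]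
  intro n
  induction n using Nat.strong_induction_on with
  | _ n ih =>
    match n with
    | 0 =>
      intro k
      rw [Matrix.det_fin_zero, Finset.prod_range_one, Finset.prod_range_one,
        Nat.add_zero, div_self (ne_of_gt (hpos k))]
    | 1 =>
      intro k
      rw [Matrix.det_fin_one]
      simp only [Tm, Matrix.of_apply, if_pos rfl, ↓reduceIte]
      have h0 := hpos k
      have h1 := hpos (k + 1)
      simp only [Finset.prod_range_succ, Finset.prod_range_one]
      rw [Fin.val_zero, Nat.add_zero]
      field_simp
      ring
    | (m + 2) =>
      intro k
      have ih1 := ih (m + 1) (by omega) (k + 1)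
      have ih0 := ih m (by omega) (k + 2)
      -- entry evaluations
      have e00 : Tm w (m + 2) k 0 0
          = 1 / (1 - w k ^ 4) + 1 / (1 - w (k + 1) ^ 4) - 1 := by
        simp [Tm]
      have e01 : Tm w (m + 2) k 0 ((0 : Fin (m + 1)).succ)
          = -(w (k + 1) ^ 2) / (1 - w (k + 1) ^ 4) := by
        simp [Tm, Fin.ext_iff]
      have e0tail : ∀ j : Fin m, Tm w (m + 2) k 0 j.succ.succ = 0 := by
        intro j
        simp only [Tm, Matrix.of_apply, Fin.ext_iff, Fin.val_succ, Fin.val_zero]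
        split_ifs <;> first | omega | rfl | contradiction
      set N : Matrix (Fin (m + 1)) (Fin (m + 1)) ℝ :=
        (Tm w (m + 2) k).submatrix Fin.succ ((1 : Fin (m + 2)).succAbove) with hN
      have en00 : N 0 0 = -(w (k + 1) ^ 2) / (1 - w (k + 1) ^ 4) := by
        simp only [hN, Matrix.submatrix_apply, Fin.succ_zero_eq_one,
          Fin.one_succAbove_zero, Tm, Matrix.of_apply, Fin.ext_iff, Fin.val_one, Fin.val_zero]
        norm_num
      have entail : ∀ i : Fin m, N i.succ 0 = 0 := by
        intro i
        simp only [hN, Matrix.submatrix_apply, Fin.one_succAbove_zero, Tm,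
          Matrix.of_apply, Fin.ext_iff, Fin.val_succ, Fin.val_zero]
        split_ifs <;> first | omega | rfl | contradiction
      have hdetN : N.det = (-(w (k + 1) ^ 2) / (1 - w (k + 1) ^ 4)) * (Tm w m (k + 2)).det := by
        rw [Matrix.det_succ_column_zero, Fin.sum_univ_succ]
        have : ∀ i : Fin m, (-1 : ℝ) ^ ((i.succ : Fin (m+1)) : ℕ) * N i.succ 0 *
            (N.submatrix i.succ.succAbove Fin.succ).det = 0 := by
          intro i; rw [entail i]; ring
        rw [Finset.sum_congr rfl fun i _ => this i, Finset.sum_const, smul_zero, add_zero,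
          en00, Fin.succAbove_zero]
        have : N.submatrix Fin.succ Fin.succ = Tm w m (k + 2) := subB w m k
        rw [this]
        simp
      have hdet : (Tm w (m + 2) k).det =
          (1 / (1 - w k ^ 4) + 1 / (1 - w (k + 1) ^ 4) - 1) * (Tm w (m + 1) (k + 1)).det
          - (-(w (k + 1) ^ 2) / (1 - w (k + 1) ^ 4)) *
            ((-(w (k + 1) ^ 2) / (1 - w (k + 1) ^ 4)) * (Tm w m (k + 2)).det) := by
        rw [Matrix.det_succ_row_zero, Fin.sum_univ_succ, Fin.sum_univ_succ]
        have tail : ∀ j : Fin m, (-1 : ℝ) ^ (((j.succ.succ : Fin (m+2))) : ℕ) *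
            Tm w (m + 2) k 0 j.succ.succ *
            ((Tm w (m + 2) k).submatrix Fin.succ j.succ.succ.succAbove).det = 0 := by
          intro j; rw [e0tail j]; ring
        rw [Finset.sum_congr rfl fun j _ => tail j, Finset.sum_const, smul_zero, add_zero,
          e00, e01, Fin.succAbove_zero, subA w m k, ih1]
        have h1 : ((0 : Fin (m + 1)).succ).succAbove = (1 : Fin (m + 2)).succAbove := by
          rw [Fin.succ_zero_eq_one]
        rw [h1, ← hN, hdetN]
        simp
        ring
      rw [hdet, ih1, ih0]
      -- product manipulations
      have hsplit1 : ∏ i ∈ Finset.range (m + 1 + 1), w (k + 1 + i) ^ 4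
          = (∏ i ∈ Finset.range (m + 1), w (k + 2 + i) ^ 4) * w (k + 1) ^ 4 := by
        rw [Finset.prod_range_succ']
        congr 1
        · exact Finset.prod_congr rfl fun i _ => by rw [show k + 1 + (i + 1) = k + 2 + i by omega]
      have hsplit1' : ∏ i ∈ Finset.range (m + 1 + 1), (1 - w (k + 1 + i) ^ 4)
          = (∏ i ∈ Finset.range (m + 1), (1 - w (k + 2 + i) ^ 4)) * (1 - w (k + 1) ^ 4) := by
        rw [Finset.prod_range_succ']
        congr 1
        · exact Finset.prod_congr rfl fun i _ => by rw [show k + 1 + (i + 1) = k + 2 + i by omega]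
      have hsplit2 : ∏ i ∈ Finset.range (m + 2 + 1), w (k + i) ^ 4
          = ((∏ i ∈ Finset.range (m + 1), w (k + 2 + i) ^ 4) * w (k + 1) ^ 4) * w k ^ 4 := by
        rw [Finset.prod_range_succ', Finset.prod_range_succ']
        congr 2
        · exact Finset.prod_congr rfl fun i _ => by rw [show k + (i + 1 + 1) = k + 2 + i by omega]
      have hsplit2' : ∏ i ∈ Finset.range (m + 2 + 1), (1 - w (k + i) ^ 4)
          = ((∏ i ∈ Finset.range (m + 1), (1 - w (k + 2 + i) ^ 4)) * (1 - w (k + 1) ^ 4))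
            * (1 - w k ^ 4) := by
        rw [Finset.prod_range_succ', Finset.prod_range_succ']
        congr 2
        · exact Finset.prod_congr rfl fun i _ => by rw [show k + (i + 1 + 1) = k + 2 + i by omega]
      rw [hsplit1, hsplit1', hsplit2, hsplit2']
      set P := ∏ i ∈ Finset.range (m + 1), w (k + 2 + i) ^ 4 with hP
      set Q := ∏ i ∈ Finset.range (m + 1), (1 - w (k + 2 + i) ^ 4) with hQ
      have hQpos : 0 < Q := Finset.prod_pos fun i _ => hpos _
      have hQne : Q ≠ 0 := ne_of_gt hQpos
      have h0 : (1 : ℝ) - w k ^ 4 ≠ 0 := ne_of_gt (hpos k)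
      have h1 : (1 : ℝ) - w (k + 1) ^ 4 ≠ 0 := ne_of_gt (hpos (k + 1))
      field_simp
      ring


/-- Tridiagonal determinant formula: for `v₁,…,vᵣ ∈ (0,1)` (here `r = s+1`), the
`(r-1)×(r-1)` tridiagonal matrix with diagonal `1/(1-vᵢ⁴) + 1/(1-vᵢ₊₁⁴) - 1` and
off-diagonal `-vᵢ₊₁²/(1-vᵢ₊₁⁴)` has determinant
`(1 - v₁⁴⋯vᵣ⁴) / ∏ᵢ (1 - vᵢ⁴)`. -/
theorem stmt_12 (s : ℕ) (v : Fin (s + 1) → ℝ) (hv : ∀ i, v i ∈ Set.Ioo (0 : ℝ) 1)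
    (M : Matrix (Fin s) (Fin s) ℝ)
    (hM : M = Matrix.of fun a b : Fin s =>
      if a = b then
        1 / (1 - v a.castSucc ^ 4) + 1 / (1 - v a.succ ^ 4) - 1
      else if (a : ℕ) + 1 = (b : ℕ) then
        -(v b.castSucc ^ 2) / (1 - v b.castSucc ^ 4)
      else if (b : ℕ) + 1 = (a : ℕ) then
        -(v a.castSucc ^ 2) / (1 - v a.castSucc ^ 4)
      else 0) :
    M.det = (1 - ∏ i, v i ^ 4) / ∏ i, (1 - v i ^ 4) := by
  set w : ℕ → ℝ := fun i => v ⟨min i s, Nat.lt_succ_of_le (min_le_right i s)⟩ with hw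
  have hwv : ∀ i : Fin (s + 1), w (i : ℕ) = v i := by
    intro i
    simp only [hw]
    congr 1
    exact Fin.ext (Nat.min_eq_left (Nat.lt_succ_iff.mp i.isLt))
  have hwIoo : ∀ i, w i ∈ Set.Ioo (0 : ℝ) 1 := fun i => hv _
  have hMT : M = Tm w s 0 := by
    rw [hM]
    ext a b
    have ha : w ((a : ℕ)) = v a.castSucc := hwv a.castSucc
    have ha' : w ((a : ℕ) + 1) = v a.succ := hwv a.succ
    have hb : w ((b : ℕ)) = v b.castSucc := hwv b.castSucc
    simp only [Tm, Matrix.of_apply, Nat.zero_add, ha, ha', hb]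
  rw [hMT, key w hwIoo s 0]
  congr 1
  · congr 1
    rw [Finset.prod_range fun i => w (0 + i) ^ 4]
    exact Finset.prod_congr rfl fun i _ => by rw [Nat.zero_add, hwv i]
  · rw [Finset.prod_range fun i => 1 - w (0 + i) ^ 4]
    exact Finset.prod_congr rfl fun i _ => by rw [Nat.zero_add, hwv i]
end

section
/- Define the sequence $J_2(m)$ by $J_2(0) = \zeta(2,1/2) = \pi^2/2$ and the property that $\int_{[0,1]^2} \frac{4\, du_1 du_2}{\sqrt{(1-u_1^2u_2^2)^2 + q^2 (1-u_1^4)(1-u_2^4)}} = \sum_{m=0}^{\infty} \binom{-1/2}{m} J_2(m) q^{2m}$ for small $q > 0$, i.e. $J_2(m) = \int_{[0,1]^2} \frac{4 (1-u_1^4)^m (1-u_2^4)^m}{(1-u_1^2 u_2^2)^{2m+1}}\, du_1 du_2$. Then for all $m \ge 2$: $4m^2 J_2(m) - (8m^2 - 8m + 3) J_2(m-1) + 4(m-1)^2 J_2(m-2) = 0$. -/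
/-!
Creative telescoping. Write `g_j` for the integrand and `D = 1 - x²y²`. The explicit rational
function `F_k = certificate k` vanishes at `x = 0` and `x = 1` and satisfies
`4(k+2)²g_{k+2} - (8(k+2)² - 8(k+2) + 3)g_{k+1} + 4(k+1)²g_k = ∂₁F_k(x, y) + ∂₁F_k(y, x)`,
so integrating over the square (Fubini, then the fundamental theorem of calculus on each slice)
kills the right-hand side. The integrands are singular only at the corner `(1, 1)`. There the
numerator of `∂₁F_k` is `O(D⁴)`, whence `|∂₁F_k| ≤ C g_k`; and
`g_j ≤ 4^(j+1) / D ≤ 4^(j+1) / √((1 - x)(1 - y))`, which is integrable.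
-/

open MeasureTheory Set

theorem pow_mul_pow_le_pow {u v s : ℝ} {a b n : ℕ} (hu : 0 ≤ u) (hv : 0 ≤ v) (hus : u ≤ s)
    (hvs : v ≤ s) (hs : s ≤ 1) (hn : n ≤ a + b) : u ^ a * v ^ b ≤ s ^ n :=
  calc u ^ a * v ^ b ≤ s ^ a * s ^ b :=
        mul_le_mul (pow_le_pow_left₀ hu hus a) (pow_le_pow_left₀ hv hvs b) (by positivity)
          (pow_nonneg (hu.trans hus) a)
    _ = s ^ (a + b) := (pow_add s a b).symm
    _ ≤ s ^ n := pow_le_pow_of_le_one (hu.trans hus) hs hn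

theorem integrableOn_inv_sqrt_one_sub :
    IntegrableOn (fun x : ℝ => (√(1 - x))⁻¹) (Ico 0 1) := by
  have h : IntervalIntegrable (fun x : ℝ => x ^ (-(1 / 2) : ℝ)) volume 0 1 :=
    intervalIntegral.intervalIntegrable_rpow' (by norm_num)
  replace h : IntervalIntegrable (fun x : ℝ => (1 - x) ^ (-(1 / 2) : ℝ)) volume 0 1 := by
    simpa using (h.comp_sub_left 1).symm
  rw [intervalIntegrable_iff_integrableOn_Ioo_of_le zero_le_one,
    ← integrableOn_Ico_iff_integrableOn_Ioo] at h
  refine h.congr_fun (fun x hx => ?_) measurableSet_Ico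
  rw [Real.sqrt_eq_rpow, ← Real.rpow_neg (by linarith [hx.2])]

namespace AperyJ2

noncomputable section

def integrand (j : ℕ) (x y : ℝ) : ℝ :=
  4 * (1 - x ^ 4) ^ j * (1 - y ^ 4) ^ j / (1 - x ^ 2 * y ^ 2) ^ (2 * j + 1)

/-- The polynomial part of the certificate, in the variables `u = 1 - x²`, `v = 1 - y²`. -/
def certPoly (k : ℕ) (u v : ℝ) : ℝ :=
  -(k + 1) * v ^ 3 + u * ((2 * k + 5) * v ^ 2 - 2 * v ^ 3 + v ^ 4 / 4)
    + u ^ 2 * (-(k + 2) * v + v ^ 3 / 4)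

def certPolyDeriv (k : ℕ) (u v : ℝ) : ℝ :=
  (2 * k + 5) * v ^ 2 - 2 * v ^ 3 + v ^ 4 / 4 + 2 * u * (-(k + 2) * v + v ^ 3 / 4)

def certificate (k : ℕ) (x y : ℝ) : ℝ :=
  4 * (1 - x ^ 4) ^ (k + 1) * (1 - y ^ 4) ^ k * (x * certPoly k (1 - x ^ 2) (1 - y ^ 2))
    / (1 - x ^ 2 * y ^ 2) ^ (2 * k + 4)

def certificateDerivNum (k : ℕ) (x y : ℝ) : ℝ :=
  ((1 - x ^ 4 - 4 * (k + 1) * x ^ 4) * (1 - x ^ 2 * y ^ 2)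
      + (4 * k + 8) * x ^ 2 * y ^ 2 * (1 - x ^ 4)) * certPoly k (1 - x ^ 2) (1 - y ^ 2)
    - 2 * x ^ 2 * (1 - x ^ 4) * (1 - x ^ 2 * y ^ 2) * certPolyDeriv k (1 - x ^ 2) (1 - y ^ 2)

def certificateDeriv (k : ℕ) (x y : ℝ) : ℝ :=
  4 * (1 - x ^ 4) ^ k * (1 - y ^ 4) ^ k * certificateDerivNum k x y
    / (1 - x ^ 2 * y ^ 2) ^ (2 * k + 5)

end

theorem hasDerivAt_certPoly (k : ℕ) (u v : ℝ) :
    HasDerivAt (fun u => certPoly k u v) (certPolyDeriv k u v) u := by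
  have h := (((hasDerivAt_id u).mul_const ((2 * k + 5) * v ^ 2 - 2 * v ^ 3 + v ^ 4 / 4)).const_add
    (-(k + 1) * v ^ 3)).add ((hasDerivAt_pow 2 u).mul_const (-(k + 2) * v + v ^ 3 / 4))
  exact h.congr_deriv (by simp only [certPolyDeriv]; ring)

theorem hasDerivAt_certificate (k : ℕ) {x y : ℝ} (hD : 1 - x ^ 2 * y ^ 2 ≠ 0) :
    HasDerivAt (fun x => certificate k x y) (certificateDeriv k x y) x := by
  have hsq : HasDerivAt (fun x : ℝ => 1 - x ^ 2) (-(2 * x)) x := by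
    simpa using (hasDerivAt_pow 2 x).const_sub 1
  have hquart := ((hasDerivAt_pow 4 x).const_sub 1).fun_pow (k + 1)
  have hc : HasDerivAt (fun x => certPoly k (1 - x ^ 2) (1 - y ^ 2))
      (certPolyDeriv k (1 - x ^ 2) (1 - y ^ 2) * -(2 * x)) x :=
    (hasDerivAt_certPoly k _ _).comp x hsq
  have hP := (hasDerivAt_id' x).mul hc
  have hden := (((hasDerivAt_pow 2 x).mul_const (y ^ 2)).const_sub 1).fun_pow (2 * k + 4)
  refine ((((hquart.const_mul 4).mul_const ((1 - y ^ 4) ^ k)).mul hP).div hden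
    (pow_ne_zero _ hD)).congr_deriv ?_
  simp only [certificateDeriv, certificateDerivNum, Pi.mul_apply]
  field_simp
  push_cast
  ring

theorem certificate_zero (k : ℕ) (y : ℝ) : certificate k 0 y = 0 := by
  simp [certificate]

theorem certificate_one (k : ℕ) (y : ℝ) : certificate k 1 y = 0 := by
  simp [certificate]

theorem recurrence_eq_certificateDeriv_add (k : ℕ) {x y : ℝ} (hD : 1 - x ^ 2 * y ^ 2 ≠ 0) :
    4 * ((k : ℝ) + 2) ^ 2 * integrand (k + 2) x y
        - (8 * ((k : ℝ) + 2) ^ 2 - 8 * ((k : ℝ) + 2) + 3) * integrand (k + 1) x y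
        + 4 * ((k : ℝ) + 1) ^ 2 * integrand k x y
      = certificateDeriv k x y + certificateDeriv k y x := by
  have hD' : 1 - y ^ 2 * x ^ 2 ≠ 0 := by rwa [mul_comm]
  simp only [integrand, certificateDeriv, certificateDerivNum, certPoly, certPolyDeriv]
  field_simp
  ring

theorem abs_certPoly_le (k : ℕ) {u v s : ℝ} (hu : 0 ≤ u) (hv : 0 ≤ v) (hus : u ≤ s)
    (hvs : v ≤ s) (hs : s ≤ 1) : |certPoly k u v| ≤ (4 * k + 11) * s ^ 3 := by
  have hk : (0 : ℝ) ≤ k := k.cast_nonneg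
  have mono {a b : ℕ} (h : 3 ≤ a + b) := pow_mul_pow_le_pow hu hv hus hvs hs h
  rw [abs_le, certPoly]
  constructor <;> nlinarith [mono (a := 0) (b := 3) le_rfl, mono (a := 1) (b := 2) le_rfl,
    mono (a := 1) (b := 3) (by norm_num), mono (a := 1) (b := 4) (by norm_num),
    mono (a := 2) (b := 1) le_rfl, mono (a := 2) (b := 3) (by norm_num),
    mul_nonneg hu hv, mul_nonneg (mul_nonneg hu hv) hv, pow_nonneg hv 3,
    mul_nonneg (mul_nonneg hu hu) hv]

theorem abs_certPolyDeriv_le (k : ℕ) {u v s : ℝ} (hu : 0 ≤ u) (hv : 0 ≤ v) (hus : u ≤ s)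
    (hvs : v ≤ s) (hs : s ≤ 1) : |certPolyDeriv k u v| ≤ (4 * k + 12) * s ^ 2 := by
  have hk : (0 : ℝ) ≤ k := k.cast_nonneg
  have mono {a b : ℕ} (h : 2 ≤ a + b) := pow_mul_pow_le_pow hu hv hus hvs hs h
  rw [abs_le, certPolyDeriv]
  constructor <;> nlinarith [mono (a := 0) (b := 2) le_rfl, mono (a := 0) (b := 3) (by norm_num),
    mono (a := 0) (b := 4) (by norm_num), mono (a := 1) (b := 1) le_rfl,
    mono (a := 1) (b := 3) (by norm_num), mul_nonneg hu hv, mul_nonneg (mul_nonneg hu hv) hv,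
    pow_nonneg hv 3, pow_nonneg hv 2]

theorem abs_certificateDerivNum_coeff_le (k : ℕ) {x y : ℝ} (hx : x ∈ Icc 0 1)
    (hy : y ∈ Icc 0 1) :
    |(1 - x ^ 4 - 4 * (k + 1) * x ^ 4) * (1 - x ^ 2 * y ^ 2)
        + (4 * k + 8) * x ^ 2 * y ^ 2 * (1 - x ^ 4)| ≤ (12 * k + 20) * (1 - x ^ 2 * y ^ 2) := by
  obtain ⟨hx0, hx1⟩ := hx
  have hk : (0 : ℝ) ≤ k := k.cast_nonneg
  have hx4 : x ^ 4 ≤ 1 := pow_le_one₀ hx0 hx1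
  have hx2 : x ^ 2 ≤ 1 := pow_le_one₀ hx0 hx1
  have hy2 : y ^ 2 ≤ 1 := pow_le_one₀ hy.1 hy.2
  have hD : 0 ≤ 1 - x ^ 2 * y ^ 2 := by nlinarith
  have hw0 : 0 ≤ 1 - x ^ 4 := sub_nonneg.2 hx4
  have hw1 : 1 - x ^ 4 ≤ 2 * (1 - x ^ 2 * y ^ 2) := by nlinarith [sq_nonneg (1 - x ^ 2)]
  have ha : |1 - x ^ 4 - 4 * (k + 1) * x ^ 4| ≤ 4 * (k : ℝ) + 4 := by
    rw [abs_le]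
    constructor <;> nlinarith [pow_nonneg hx0 4, mul_le_mul_of_nonneg_left hx4 hk]
  calc _ ≤ |1 - x ^ 4 - 4 * (k + 1) * x ^ 4| * (1 - x ^ 2 * y ^ 2)
        + (4 * k + 8) * x ^ 2 * y ^ 2 * (1 - x ^ 4) := by
        grw [abs_add_le, abs_mul, abs_of_nonneg hD, abs_of_nonneg (by positivity :
          0 ≤ (4 * k + 8) * x ^ 2 * y ^ 2 * (1 - x ^ 4))]
    _ ≤ (4 * k + 4) * (1 - x ^ 2 * y ^ 2) + (4 * k + 8) * 1 * 1 * (2 * (1 - x ^ 2 * y ^ 2)) := by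
        gcongr
    _ = _ := by ring

theorem abs_certificateDerivNum_le (k : ℕ) {x y : ℝ} (hx : x ∈ Icc 0 1)
    (hy : y ∈ Icc 0 1) :
    |certificateDerivNum k x y|
      ≤ ((12 * k + 20) * (4 * k + 11) + 4 * (4 * k + 12)) * (1 - x ^ 2 * y ^ 2) ^ 4 := by
  have hα := abs_certificateDerivNum_coeff_le k hx hy
  obtain ⟨hx0, hx1⟩ := hx
  obtain ⟨hy0, hy1⟩ := hy
  have hx2 : x ^ 2 ≤ 1 := pow_le_one₀ hx0 hx1
  have hy2 : y ^ 2 ≤ 1 := pow_le_one₀ hy0 hy1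
  set D := 1 - x ^ 2 * y ^ 2
  have hu : 1 - x ^ 2 ≤ D := by nlinarith
  have hv : 1 - y ^ 2 ≤ D := by nlinarith
  have hD0 : 0 ≤ D := by nlinarith
  have hD1 : D ≤ 1 := by nlinarith
  have hP := abs_certPoly_le k (sub_nonneg.2 hx2) (sub_nonneg.2 hy2) hu hv hD1
  have hQ := abs_certPolyDeriv_le k (sub_nonneg.2 hx2) (sub_nonneg.2 hy2) hu hv hD1
  have hβ : |2 * x ^ 2 * (1 - x ^ 4) * D| ≤ 4 * D ^ 2 := by
    have hw0 : 0 ≤ 1 - x ^ 4 := by nlinarith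
    have hw1 : 1 - x ^ 4 ≤ 2 * D := by nlinarith
    rw [abs_of_nonneg (by positivity)]
    calc 2 * x ^ 2 * (1 - x ^ 4) * D ≤ 2 * 1 * (2 * D) * D := by gcongr
      _ = _ := by ring
  calc |certificateDerivNum k x y|
      ≤ |(1 - x ^ 4 - 4 * (k + 1) * x ^ 4) * D + (4 * k + 8) * x ^ 2 * y ^ 2 * (1 - x ^ 4)|
          * |certPoly k (1 - x ^ 2) (1 - y ^ 2)|
        + |2 * x ^ 2 * (1 - x ^ 4) * D| * |certPolyDeriv k (1 - x ^ 2) (1 - y ^ 2)| := by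
        rw [← abs_mul, ← abs_mul]
        exact abs_sub _ _
    _ ≤ (12 * k + 20) * D * ((4 * k + 11) * D ^ 3) + 4 * D ^ 2 * ((4 * k + 12) * D ^ 2) := by
        grw [hα, hP, hβ, hQ]
    _ = _ := by ring

theorem integrand_nonneg (j : ℕ) {x y : ℝ} (hx : x ∈ Icc 0 1) (hy : y ∈ Icc 0 1) :
    0 ≤ integrand j x y := by
  have := sub_nonneg.2 (pow_le_one₀ (n := 4) hx.1 hx.2)
  have := sub_nonneg.2 (pow_le_one₀ (n := 4) hy.1 hy.2)
  have := sub_nonneg.2 (mul_le_one₀ (pow_le_one₀ (n := 2) hx.1 hx.2) (sq_nonneg y)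
    (pow_le_one₀ hy.1 hy.2))
  unfold integrand
  positivity

theorem integrand_le (j : ℕ) {x y : ℝ} (hx : x ∈ Icc 0 1) (hy : y ∈ Icc 0 1)
    (hD : 0 < 1 - x ^ 2 * y ^ 2) : integrand j x y ≤ 4 ^ (j + 1) * (1 - x ^ 2 * y ^ 2)⁻¹ := by
  obtain ⟨hx0, hx1⟩ := hx
  obtain ⟨hy0, hy1⟩ := hy
  have hx2 : x ^ 2 ≤ 1 := pow_le_one₀ hx0 hx1
  have hy2 : y ^ 2 ≤ 1 := pow_le_one₀ hy0 hy1
  have hx4 : 0 ≤ 1 - x ^ 4 := by nlinarith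
  have hy4 : 0 ≤ 1 - y ^ 4 := by nlinarith
  rw [integrand, div_le_iff₀ (by positivity)]
  calc 4 * (1 - x ^ 4) ^ j * (1 - y ^ 4) ^ j
      ≤ 4 * (2 * (1 - x ^ 2 * y ^ 2)) ^ j * (2 * (1 - x ^ 2 * y ^ 2)) ^ j := by
        gcongr
        · nlinarith [sq_nonneg (1 - x ^ 2), mul_nonneg (sq_nonneg x) (sub_nonneg.2 hy2)]
        · nlinarith [sq_nonneg (1 - y ^ 2), mul_nonneg (sq_nonneg y) (sub_nonneg.2 hx2)]
    _ = _ := by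
        rw [mul_pow, pow_succ (4 : ℝ),
          show (4 : ℝ) ^ j = 2 ^ j * 2 ^ j by rw [← mul_pow]; norm_num]
        field_simp
        ring

theorem abs_certificateDeriv_le (k : ℕ) {x y : ℝ} (hx : x ∈ Icc 0 1)
    (hy : y ∈ Icc 0 1) (hD : 0 < 1 - x ^ 2 * y ^ 2) :
    |certificateDeriv k x y|
      ≤ ((12 * k + 20) * (4 * k + 11) + 4 * (4 * k + 12)) * integrand k x y := by
  have hsplit : certificateDeriv k x y
      = certificateDerivNum k x y / (1 - x ^ 2 * y ^ 2) ^ 4 * integrand k x y := by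
    unfold certificateDeriv integrand
    field_simp
    ring
  rw [hsplit, abs_mul, abs_of_nonneg (integrand_nonneg k hx hy), abs_div,
    abs_of_pos (by positivity : (0 : ℝ) < (1 - x ^ 2 * y ^ 2) ^ 4)]
  refine mul_le_mul_of_nonneg_right ?_ (integrand_nonneg k hx hy)
  exact div_le_of_le_mul₀ (by positivity) (by positivity) (abs_certificateDerivNum_le k hx hy)

theorem inv_one_sub_sq_mul_sq_le {x y : ℝ} (hx : x ∈ Ico 0 1) (hy : y ∈ Ico 0 1) :
    (1 - x ^ 2 * y ^ 2)⁻¹ ≤ (√(1 - x))⁻¹ * (√(1 - y))⁻¹ := by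
  obtain ⟨hx0, hx1⟩ := hx
  obtain ⟨hy0, hy1⟩ := hy
  have hxy0 : 0 ≤ x * y := mul_nonneg hx0 hy0
  have hxy1 : 1 - x ≤ 1 - x * y := by nlinarith
  have hxy2 : 1 - y ≤ 1 - x * y := by nlinarith
  have hsq : 1 - x * y ≤ 1 - x ^ 2 * y ^ 2 := by nlinarith
  rw [← mul_inv, ← Real.sqrt_mul (by linarith)]
  refine inv_anti₀ (Real.sqrt_pos.2 (by nlinarith)) (Real.sqrt_le_iff.2 ⟨by linarith, ?_⟩)
  calc (1 - x) * (1 - y) ≤ (1 - x * y) * (1 - x * y) :=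
        mul_le_mul hxy1 hxy2 (by linarith) (by linarith)
    _ ≤ (1 - x ^ 2 * y ^ 2) ^ 2 := by rw [← pow_two]; gcongr; linarith

theorem one_sub_sq_mul_sq_pos {x y : ℝ} (hx : x ∈ Icc 0 1) (hy : y ∈ Ico 0 1) :
    0 < 1 - x ^ 2 * y ^ 2 := by
  have : y ^ 2 < 1 := pow_lt_one₀ hy.1 hy.2 two_ne_zero
  nlinarith [pow_le_one₀ hx.1 hx.2 (n := 2), sq_nonneg x]

/-- Lebesgue measure on the half-open square `[0,1)²`, which differs from `[0,1]²` by a null set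
and avoids the edges where `(√(1 - x))⁻¹` takes the junk value `0`. -/
noncomputable abbrev squareMeasure : Measure (ℝ × ℝ) :=
  (volume.restrict (Ico (0 : ℝ) 1)).prod (volume.restrict (Ico (0 : ℝ) 1))

theorem setIntegral_Icc_prod_Icc (f : ℝ × ℝ → ℝ) :
    ∫ p in Icc (0 : ℝ) 1 ×ˢ Icc (0 : ℝ) 1, f p = ∫ p, f p ∂squareMeasure := by
  rw [squareMeasure, Measure.prod_restrict, Measure.volume_eq_prod]
  exact setIntegral_congr_set (Measure.set_prod_ae_eq Ico_ae_eq_Icc Ico_ae_eq_Icc).symm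

theorem ae_mem_squareMeasure :
    ∀ᵐ p ∂squareMeasure, p.1 ∈ Ico 0 1 ∧ p.2 ∈ Ico 0 1 := by
  rw [squareMeasure, Measure.prod_restrict]
  exact ae_restrict_mem (measurableSet_Ico.prod measurableSet_Ico)

theorem integrable_inv_one_sub_sq_mul_sq :
    Integrable (fun p : ℝ × ℝ => (1 - p.1 ^ 2 * p.2 ^ 2)⁻¹) squareMeasure := by
  refine (integrableOn_inv_sqrt_one_sub.mul_prod integrableOn_inv_sqrt_one_sub).mono'
    (by fun_prop) ?_
  filter_upwards [ae_mem_squareMeasure] with p ⟨hx, hy⟩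
  rw [norm_inv, Real.norm_of_nonneg (one_sub_sq_mul_sq_pos (Ico_subset_Icc_self hx) hy).le]
  exact inv_one_sub_sq_mul_sq_le hx hy

theorem integrable_integrand (j : ℕ) :
    Integrable (fun p : ℝ × ℝ => integrand j p.1 p.2) squareMeasure := by
  refine (integrable_inv_one_sub_sq_mul_sq.const_mul (4 ^ (j + 1))).mono'
    (by unfold integrand; fun_prop : Measurable _).aestronglyMeasurable ?_
  filter_upwards [ae_mem_squareMeasure] with p ⟨hx, hy⟩
  have hx := Ico_subset_Icc_self hx
  rw [Real.norm_of_nonneg (integrand_nonneg j hx (Ico_subset_Icc_self hy))]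
  exact integrand_le j hx (Ico_subset_Icc_self hy) (one_sub_sq_mul_sq_pos hx hy)

theorem integrable_certificateDeriv (k : ℕ) :
    Integrable (fun p : ℝ × ℝ => certificateDeriv k p.1 p.2) squareMeasure := by
  refine ((integrable_integrand k).const_mul
    ((12 * k + 20) * (4 * k + 11) + 4 * (4 * k + 12))).mono'
    (by unfold certificateDeriv certificateDerivNum certPoly certPolyDeriv; fun_prop :
      Measurable _).aestronglyMeasurable ?_
  filter_upwards [ae_mem_squareMeasure] with p ⟨hx, hy⟩
  have hx := Ico_subset_Icc_self hx
  exact abs_certificateDeriv_le k hx (Ico_subset_Icc_self hy) (one_sub_sq_mul_sq_pos hx hy)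

theorem integral_certificateDeriv_slice (k : ℕ) {y : ℝ} (hy : y ∈ Ico 0 1) :
    ∫ x in Ico (0 : ℝ) 1, certificateDeriv k x y = 0 := by
  have hD : ∀ x ∈ uIcc (0 : ℝ) 1, 1 - x ^ 2 * y ^ 2 ≠ 0 := fun x hx =>
    (one_sub_sq_mul_sq_pos (by rwa [uIcc_of_le zero_le_one] at hx) hy).ne'
  have hcont : ContinuousOn (fun x => certificateDeriv k x y) (uIcc 0 1) := by
    unfold certificateDeriv
    exact ContinuousOn.div (by unfold certificateDerivNum certPoly certPolyDeriv; fun_prop)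
      (by fun_prop) fun x hx => pow_ne_zero _ (hD x hx)
  rw [integral_Ico_eq_integral_Ioo, ← integral_Ioc_eq_integral_Ioo,
    ← intervalIntegral.integral_of_le zero_le_one,
    intervalIntegral.integral_eq_sub_of_hasDerivAt (fun x hx => hasDerivAt_certificate k (hD x hx))
      hcont.intervalIntegrable, certificate_one, certificate_zero, sub_zero]

theorem integral_certificateDeriv (k : ℕ) :
    ∫ p, certificateDeriv k p.1 p.2 ∂squareMeasure = 0 := by
  rw [integral_prod_symm _ (integrable_certificateDeriv k)]
  refine integral_eq_zero_of_ae ?_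
  filter_upwards [ae_restrict_mem measurableSet_Ico] with y hy
  exact integral_certificateDeriv_slice k hy

theorem integral_certificateDeriv_swap (k : ℕ) :
    ∫ p, certificateDeriv k p.2 p.1 ∂squareMeasure = 0 :=
  (integral_prod_swap fun p : ℝ × ℝ => certificateDeriv k p.1 p.2).trans
    (integral_certificateDeriv k)

theorem integral_recurrence (k : ℕ) :
    4 * ((k : ℝ) + 2) ^ 2 * ∫ p, integrand (k + 2) p.1 p.2 ∂squareMeasure
      - (8 * ((k : ℝ) + 2) ^ 2 - 8 * ((k : ℝ) + 2) + 3)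
        * ∫ p, integrand (k + 1) p.1 p.2 ∂squareMeasure
      + 4 * ((k : ℝ) + 1) ^ 2 * ∫ p, integrand k p.1 p.2 ∂squareMeasure = 0 := by
  have hI := integrable_integrand
  have hG := integrable_certificateDeriv k
  have hG' : Integrable (fun p : ℝ × ℝ => certificateDeriv k p.2 p.1) squareMeasure := hG.swap
  calc _ = ∫ p, (4 * ((k : ℝ) + 2) ^ 2 * integrand (k + 2) p.1 p.2
          - (8 * ((k : ℝ) + 2) ^ 2 - 8 * ((k : ℝ) + 2) + 3) * integrand (k + 1) p.1 p.2
          + 4 * ((k : ℝ) + 1) ^ 2 * integrand k p.1 p.2) ∂squareMeasure := by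
        rw [integral_add ?_ ((hI _).const_mul _),
          integral_sub ((hI _).const_mul _) ((hI _).const_mul _), integral_const_mul,
          integral_const_mul, integral_const_mul]
        exact ((hI _).const_mul _).sub ((hI _).const_mul _)
    _ = ∫ p, (certificateDeriv k p.1 p.2 + certificateDeriv k p.2 p.1) ∂squareMeasure := by
        refine integral_congr_ae ?_
        filter_upwards [ae_mem_squareMeasure] with p ⟨hx, hy⟩
        exact recurrence_eq_certificateDeriv_add k
          (one_sub_sq_mul_sq_pos (Ico_subset_Icc_self hx) hy).ne'
    _ = 0 := by
        rw [integral_add hG hG', integral_certificateDeriv, integral_certificateDeriv_swap,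
          add_zero]

end AperyJ2

/-- Three-term recurrence for the Apéry-like numbers
`J₂(m) = ∫_{[0,1]²} 4(1-u₁⁴)ᵐ(1-u₂⁴)ᵐ/(1-u₁²u₂²)^{2m+1} du₁du₂`:
`4m² J₂(m) - (8m² - 8m + 3) J₂(m-1) + 4(m-1)² J₂(m-2) = 0` for `m ≥ 2`. -/
theorem stmt_13 (J : ℕ → ℝ)
    (hJ : ∀ m : ℕ, J m =
      ∫ p in (Set.Icc (0 : ℝ) 1 ×ˢ Set.Icc (0 : ℝ) 1),
        4 * (1 - p.1 ^ 4) ^ m * (1 - p.2 ^ 4) ^ m / (1 - p.1 ^ 2 * p.2 ^ 2) ^ (2 * m + 1)) :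
    ∀ m : ℕ, 2 ≤ m →
      4 * (m : ℝ) ^ 2 * J m - (8 * (m : ℝ) ^ 2 - 8 * m + 3) * J (m - 1)
        + 4 * ((m : ℝ) - 1) ^ 2 * J (m - 2) = 0 := by
  intro m hm
  obtain ⟨k, rfl⟩ : ∃ k, m = k + 2 := ⟨m - 2, by omega⟩
  have hJ' (j : ℕ) : J j = ∫ p, AperyJ2.integrand j p.1 p.2 ∂AperyJ2.squareMeasure :=
    (hJ j).trans (AperyJ2.setIntegral_Icc_prod_Icc _)
  rw [show k + 2 - 1 = k + 1 by omega, show k + 2 - 2 = k by omega, hJ', hJ', hJ']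
  push_cast
  linear_combination AperyJ2.integral_recurrence k
end

section
/- The function $w(t) = \frac{3\zeta(2)}{1-t} \, {}_2F_1\!\left( \tfrac12, \tfrac12; 1; \tfrac{t}{t-1} \right)$ satisfies the singly confluent Heun differential equation $t(1-t)^2 w''(t) + (1-3t)(1-t) w'(t) + \left(t - \tfrac34\right) w(t) = 0$ for $t$ in a neighborhood of $0$ (with $t < 1$, $t \ne 0$ handled by analytic continuation / the equation holding on $(0,1)$). -/
/-!
The coefficients `c m = ((1/2)_m / m!)²` of `F = ₂F₁(1/2, 1/2; 1; ·)` satisfy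
`(m + 1)² c (m + 1) = (m + 1/2)² c m` and are bounded by `1`, so `F` can be differentiated
termwise on `(-1, 1)`, and the recurrence makes the series of
`z (1 - z) F'' + (1 - 2z) F' - F / 4` telescope to `0`. For `t < 1/2` the point `u = t / (t - 1)`
lies in `(-1, 1)`, and the chain rule shows that the Heun operator applied to
`w t = K / (1 - t) · F u` is `K / (t - 1)` times the hypergeometric operator applied to `F` at `u`.
-/

open Metric

/-- The `k`-th termwise derivative of `∑ a n * x ^ n`; since `n.descFactorial k = 0` for `n < k`,
the truncated exponent `n - k` does no harm. -/
noncomputable def powSeriesDeriv (a : ℕ → ℝ) (k : ℕ) (x : ℝ) : ℝ :=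
  ∑' n, a n * n.descFactorial k * x ^ (n - k)

lemma powSeriesDeriv_zero (a : ℕ → ℝ) (x : ℝ) : powSeriesDeriv a 0 x = ∑' n, a n * x ^ n := by
  simp [powSeriesDeriv]

lemma abs_descFactorial_mul_pow_le {r y : ℝ} (hr : 0 < r) (hy : |y| ≤ r) (n k : ℕ) :
    |(n.descFactorial k : ℝ) * y ^ (n - k)| ≤ r⁻¹ ^ k * ((n : ℝ) ^ k * r ^ n) := by
  rcases lt_or_ge n k with hnk | hkn
  · rw [Nat.descFactorial_eq_zero_iff_lt.2 hnk]
    simp only [Nat.cast_zero, zero_mul, abs_zero]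
    positivity
  · have hdesc : (n.descFactorial k : ℝ) ≤ n ^ k := by
      exact_mod_cast Nat.descFactorial_le_pow n k
    have hpow : |y| ^ (n - k) ≤ r ^ n * r⁻¹ ^ k := by
      rw [inv_pow, ← pow_sub₀ r hr.ne' hkn]
      exact pow_le_pow_left₀ (abs_nonneg y) hy _
    rw [abs_mul, Nat.abs_cast, abs_pow]
    calc (n.descFactorial k : ℝ) * |y| ^ (n - k) ≤ n ^ k * (r ^ n * r⁻¹ ^ k) :=
          mul_le_mul hdesc hpow (by positivity) (by positivity)
      _ = r⁻¹ ^ k * (n ^ k * r ^ n) := by ring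

lemma norm_mul_descFactorial_mul_pow_le {a : ℕ → ℝ} {C r y : ℝ} (ha : ∀ n, |a n| ≤ C)
    (hr : 0 < r) (hy : |y| ≤ r) (n k : ℕ) :
    ‖a n * n.descFactorial k * y ^ (n - k)‖ ≤ C * (r⁻¹ ^ k * ((n : ℝ) ^ k * r ^ n)) := by
  rw [Real.norm_eq_abs, mul_assoc, abs_mul]
  exact mul_le_mul (ha n) (abs_descFactorial_mul_pow_le hr hy n k) (abs_nonneg _)
    ((abs_nonneg _).trans (ha n))

lemma summable_mul_pow_mul_geometric (C : ℝ) {r : ℝ} (hr₀ : 0 ≤ r) (hr₁ : r < 1) (k : ℕ) :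
    Summable fun n : ℕ ↦ C * (r⁻¹ ^ k * ((n : ℝ) ^ k * r ^ n)) := by
  have hr : ‖r‖ < 1 := by rwa [Real.norm_of_nonneg hr₀]
  exact ((summable_pow_mul_geometric_of_norm_lt_one k hr).mul_left _).mul_left C

lemma summable_powSeriesDeriv {a : ℕ → ℝ} {C : ℝ} (ha : ∀ n, |a n| ≤ C) (k : ℕ) {x : ℝ}
    (hx : |x| < 1) : Summable fun n ↦ a n * n.descFactorial k * x ^ (n - k) := by
  obtain ⟨r, hxr, hr₁⟩ := exists_between hx
  have hr : 0 < r := (abs_nonneg x).trans_lt hxr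
  exact .of_norm_bounded (summable_mul_pow_mul_geometric C hr.le hr₁ k)
    (norm_mul_descFactorial_mul_pow_le ha hr hxr.le · k)

lemma hasDerivAt_descFactorial_mul_pow (n k : ℕ) (x : ℝ) :
    HasDerivAt (fun y : ℝ ↦ (n.descFactorial k : ℝ) * y ^ (n - k))
      (n.descFactorial (k + 1) * x ^ (n - (k + 1))) x := by
  refine ((hasDerivAt_pow (n - k) x).const_mul (n.descFactorial k : ℝ)).congr_deriv ?_
  rw [Nat.descFactorial_succ, Nat.sub_sub]
  push_cast
  ring

theorem hasDerivAt_powSeriesDeriv {a : ℕ → ℝ} {C : ℝ} (ha : ∀ n, |a n| ≤ C) (k : ℕ) {x : ℝ}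
    (hx : |x| < 1) : HasDerivAt (powSeriesDeriv a k) (powSeriesDeriv a (k + 1) x) x := by
  obtain ⟨r, hxr, hr₁⟩ := exists_between hx
  have hr : 0 < r := (abs_nonneg x).trans_lt hxr
  have hbound : ∀ n, ∀ y ∈ ball (0 : ℝ) r, ‖a n * n.descFactorial (k + 1) * y ^ (n - (k + 1))‖
      ≤ C * (r⁻¹ ^ (k + 1) * ((n : ℝ) ^ (k + 1) * r ^ n)) := fun n y hy ↦
    norm_mul_descFactorial_mul_pow_le ha hr (by simpa using (mem_ball_zero_iff.1 hy).le) n _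
  have hterm : ∀ n y, HasDerivAt (fun y : ℝ ↦ a n * n.descFactorial k * y ^ (n - k))
      (a n * n.descFactorial (k + 1) * y ^ (n - (k + 1))) y := fun n y ↦ by
    simpa only [mul_assoc] using (hasDerivAt_descFactorial_mul_pow n k y).const_mul (a n)
  exact hasDerivAt_tsum_of_isPreconnected (summable_mul_pow_mul_geometric C hr.le hr₁ (k + 1))
    isOpen_ball (convex_ball 0 r).isPreconnected (fun n y _ ↦ hterm n y)
    hbound (mem_ball_self hr) (summable_powSeriesDeriv ha k (by simp))
    (by simpa using hxr)

lemma mul_descFactorial_succ_mul_pow (n k : ℕ) (z : ℝ) :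
    z * ((n.descFactorial (k + 1) : ℝ) * z ^ (n - (k + 1))) =
      ((n : ℝ) - k) * (n.descFactorial k * z ^ (n - k)) := by
  rcases lt_trichotomy n k with hnk | rfl | hkn
  · simp [Nat.descFactorial_eq_zero_iff_lt.2 hnk]
  · simp
  · rw [Nat.descFactorial_succ, Nat.cast_mul, Nat.cast_sub hkn.le,
      show n - k = n - (k + 1) + 1 by omega, pow_succ]
    ring

theorem hypergeometric_ode_of_recurrence {f : ℕ → ℝ} {C a b c : ℝ} (hf : ∀ n, |f n| ≤ C)
    (hrec : ∀ n : ℕ, (n + 1) * (n + c) * f (n + 1) = (n + a) * (n + b) * f n) {z : ℝ}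
    (hz : |z| < 1) :
    z * (1 - z) * powSeriesDeriv f 2 z + (c - (a + b + 1) * z) * powSeriesDeriv f 1 z
      - a * b * powSeriesDeriv f 0 z = 0 := by
  set T : ℕ → ℕ → ℝ := fun k n ↦ f n * n.descFactorial k * z ^ (n - k)
  have hT : ∀ k, HasSum (T k) (powSeriesDeriv f k z) := fun k ↦
    (summable_powSeriesDeriv hf k hz).hasSum
  have hT_succ : ∀ k n, z * T (k + 1) n = ((n : ℝ) - k) * T k n := fun k n ↦ by
    linear_combination f n * mul_descFactorial_succ_mul_pow n k z
  -- `e n = n (n - 1 + c) f n z ^ (n - 1)` and `d n = (n + a) (n + b) f n z ^ n`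
  set e : ℕ → ℝ := fun n ↦ z * T 2 n + c * T 1 n
  set d : ℕ → ℝ := fun n ↦ z ^ 2 * T 2 n + (a + b + 1) * z * T 1 n + a * b * T 0 n
  have he_succ : ∀ n, e (n + 1) = d n := fun n ↦ by
    have hT₁ : T 1 (n + 1) = (n + 1) * f (n + 1) * z ^ n := by
      simp only [T, Nat.descFactorial_one, Nat.add_sub_cancel]
      push_cast
      ring
    have hT₀ : T 0 n = f n * z ^ n := by simp [T]
    have hT₂ := hT_succ 1 (n + 1)
    push_cast at hT₂
    linear_combination hT₂ + (n + c) * hT₁ - z * hT_succ 1 n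
      - (n + a + b) * hT_succ 0 n + z ^ n * hrec n - (n + a) * (n + b) * hT₀
  have hd : Summable d :=
    (((hT 2).summable.mul_left _).add ((hT 1).summable.mul_left _)).add
      ((hT 0).summable.mul_left _)
  have he : HasSum e (∑' n, d n) := by
    have he₀ : e 0 = 0 := by simp [e, T]
    rw [← hasSum_nat_add_iff' 1, Finset.sum_range_one, he₀, sub_zero, funext he_succ]
    exact hd.hasSum
  have hsum := (((hT 2).mul_left (z * (1 - z))).add
    ((hT 1).mul_left (c - (a + b + 1) * z))).sub ((hT 0).mul_left (a * b))
  have hed : (fun n ↦ e n - d n) = fun n ↦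
      z * (1 - z) * T 2 n + (c - (a + b + 1) * z) * T 1 n - a * b * T 0 n := by
    funext n
    simp only [e, d]
    ring
  have h := he.sub hd.hasSum
  rw [hed, sub_self] at h
  exact hsum.unique h

noncomputable def hypergeomHalfCoeff (m : ℕ) : ℝ :=
  (∏ i ∈ Finset.range m, ((1 : ℝ) / 2 + i)) ^ 2 / ((Nat.factorial m : ℝ)) ^ 2

lemma hypergeomHalfCoeff_succ (n : ℕ) :
    hypergeomHalfCoeff (n + 1) = hypergeomHalfCoeff n * ((n + 1 / 2) / (n + 1)) ^ 2 := by
  simp only [hypergeomHalfCoeff, Finset.prod_range_succ, Nat.factorial_succ, Nat.cast_mul]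
  push_cast
  field_simp
  ring

lemma hypergeomHalfCoeff_recurrence (n : ℕ) :
    (n + 1) * (n + 1) * hypergeomHalfCoeff (n + 1) =
      (n + 1 / 2) * (n + 1 / 2) * hypergeomHalfCoeff n := by
  rw [hypergeomHalfCoeff_succ]
  field_simp

lemma abs_hypergeomHalfCoeff_le_one (n : ℕ) : |hypergeomHalfCoeff n| ≤ 1 := by
  rw [abs_of_nonneg (by unfold hypergeomHalfCoeff; positivity)]
  induction n with
  | zero => simp [hypergeomHalfCoeff]
  | succ n ih =>
    have hq : ((n + 1 / 2) / (n + 1) : ℝ) ^ 2 ≤ 1 :=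
      pow_le_one₀ (by positivity) ((div_le_one (by positivity)).2 (by linarith))
    rw [hypergeomHalfCoeff_succ]
    exact mul_le_one₀ ih (by positivity) hq

lemma abs_div_sub_one_lt_one {t : ℝ} (ht : t < 1 / 2) : |t / (t - 1)| < 1 := by
  rw [abs_div, abs_of_neg (by linarith : t - 1 < 0), div_lt_one (by linarith), abs_lt]
  constructor <;> linarith

lemma hasDerivAt_comp_div_sub_one_div_pow {G G' : ℝ → ℝ} {t : ℝ} (ht : t ≠ 1)
    (hG : HasDerivAt G (G' (t / (t - 1))) (t / (t - 1))) (j : ℕ) :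
    HasDerivAt (fun x ↦ G (x / (x - 1)) / (1 - x) ^ j)
      (j * G (t / (t - 1)) / (1 - t) ^ (j + 1) - G' (t / (t - 1)) / (1 - t) ^ (j + 2)) t := by
  have h₁ : t - 1 ≠ 0 := sub_ne_zero.2 ht
  have h₂ : 1 - t ≠ 0 := sub_ne_zero.2 (Ne.symm ht)
  have hu : HasDerivAt (fun x ↦ x / (x - 1)) ((1 * (t - 1) - t * 1) / (t - 1) ^ 2) t :=
    (hasDerivAt_id t).div ((hasDerivAt_id t).sub_const 1) h₁
  have hp : HasDerivAt (fun x ↦ (1 - x) ^ j) (j * (1 - t) ^ (j - 1) * (0 - 1)) t :=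
    ((hasDerivAt_const t 1).sub (hasDerivAt_id t)).pow j
  refine ((hG.comp t hu).div hp (pow_ne_zero j h₂)).congr_deriv ?_
  simp only [Function.comp_apply]
  rcases j with _ | j
  · field_simp
    ring
  · rw [Nat.add_sub_cancel]
    have h₁' : (t - 1) = -(1 - t) := by ring
    rw [h₁']
    field_simp
    ring

theorem heun_of_hypergeometric {F F₁ F₂ w : ℝ → ℝ} (K : ℝ)
    (hF : ∀ u, |u| < 1 → HasDerivAt F (F₁ u) u) (hF₁ : ∀ u, |u| < 1 → HasDerivAt F₁ (F₂ u) u)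
    (hode : ∀ u, |u| < 1 → u * (1 - u) * F₂ u + (1 - 2 * u) * F₁ u - F u / 4 = 0)
    (hw : ∀ x, w x = K / (1 - x) * F (x / (x - 1))) {t : ℝ} (ht : t < 1 / 2) :
    t * (1 - t) ^ 2 * deriv (deriv w) t + (1 - 3 * t) * (1 - t) * deriv w t
      + (t - 3 / 4) * w t = 0 := by
  have hw' : ∀ x < 1 / 2, HasDerivAt w
      (K * (F (x / (x - 1)) / (1 - x) ^ 2 - F₁ (x / (x - 1)) / (1 - x) ^ 3)) x := fun x hx ↦ by
    have h := (hasDerivAt_comp_div_sub_one_div_pow (by linarith)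
      (hF _ (abs_div_sub_one_lt_one hx)) 1).const_mul K
    have hw_eq : w = fun y ↦ K * (F (y / (y - 1)) / (1 - y) ^ 1) := funext fun y ↦ by
      rw [hw]
      ring
    rw [hw_eq]
    exact h.congr_deriv (by push_cast; ring)
  have hw'' : HasDerivAt
      (fun x ↦ K * (F (x / (x - 1)) / (1 - x) ^ 2 - F₁ (x / (x - 1)) / (1 - x) ^ 3))
      (K * ((2 * F (t / (t - 1)) / (1 - t) ^ 3 - F₁ (t / (t - 1)) / (1 - t) ^ 4)
        - (3 * F₁ (t / (t - 1)) / (1 - t) ^ 4 - F₂ (t / (t - 1)) / (1 - t) ^ 5))) t := by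
    have hu := abs_div_sub_one_lt_one ht
    have h₁ : t ≠ 1 := by linarith
    refine (((hasDerivAt_comp_div_sub_one_div_pow h₁ (hF _ hu) 2).sub
      (hasDerivAt_comp_div_sub_one_div_pow h₁ (hF₁ _ hu) 3)).const_mul K).congr_deriv ?_
    push_cast
    ring
  have hderiv : deriv w =ᶠ[nhds t] _ :=
    Filter.eventually_of_mem (Iio_mem_nhds ht) fun x hx ↦ (hw' x hx).deriv
  rw [hderiv.deriv_eq, hw''.deriv, (hw' t ht).deriv, hw t]
  have h₁ : t - 1 ≠ 0 := by linarith
  have h₂ : 1 - t ≠ 0 := by linarith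
  set u := t / (t - 1)
  calc _ = K / (t - 1) * (u * (1 - u) * F₂ u + (1 - 2 * u) * F₁ u - F u / 4) := by
        simp only [u]
        field_simp
        ring
    _ = 0 := by rw [hode u (abs_div_sub_one_lt_one ht), mul_zero]

/-- The function `w(t) = 3ζ(2)/(1-t) · ₂F₁(1/2,1/2;1;t/(t-1))` satisfies the singly
confluent Heun equation `t(1-t)²w'' + (1-3t)(1-t)w' + (t - 3/4)w = 0` near `0`. -/
theorem stmt_14 (F : ℝ → ℝ)
    (hF : ∀ z : ℝ, F z = ∑' m : ℕ,
      ((∏ i ∈ Finset.range m, ((1 : ℝ) / 2 + i)) ^ 2 / ((Nat.factorial m : ℝ)) ^ 2) * z ^ m)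
    (w : ℝ → ℝ)
    (hw : ∀ t : ℝ, w t = 3 * (Real.pi ^ 2 / 6) / (1 - t) * F (t / (t - 1))) :
    ∃ ε > (0 : ℝ), ∀ t : ℝ, |t| < ε →
      t * (1 - t) ^ 2 * deriv (deriv w) t + (1 - 3 * t) * (1 - t) * deriv w t
        + (t - 3 / 4) * w t = 0 := by
  have hF₀ : F = powSeriesDeriv hypergeomHalfCoeff 0 :=
    funext fun z ↦ by rw [hF, powSeriesDeriv_zero]; rfl
  subst hF₀
  have hC := abs_hypergeomHalfCoeff_le_one
  refine ⟨1 / 2, by norm_num, fun t ht ↦ ?_⟩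
  refine heun_of_hypergeometric _ (fun u hu ↦ hasDerivAt_powSeriesDeriv hC 0 hu)
    (fun u hu ↦ hasDerivAt_powSeriesDeriv hC 1 hu) (fun u hu ↦ ?_) hw (abs_lt.1 ht).2
  have hode := hypergeometric_ode_of_recurrence (a := 1 / 2) (b := 1 / 2) (c := 1) hC
    hypergeomHalfCoeff_recurrence hu
  linear_combination hode
end
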